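/- arXiv:1709.01542 — 7 statements merged into one kernel-verified Lean document; each statement's English description precedes it below -/
import Mathlib

section
/- Let H₃ be a connected simple graph containing a vertex v with d(v) ≥ 3 that has two pendant paths each of length at least 2: a pendant path v v₂ u₂₁ … u₂t₂ and a pendant path v vℓ … uℓ₁ uℓtℓ (so v₂ has exactly the two neighbors v and u₂₁, all internal vertices of the paths have degree 2, and u₂t₂ and uℓtℓ are pendant vertices). Let w₁w₂ be an edge lying on a cycle of H₃, and let H₄ = H₃ − {vv₂, u₂₁v₂, w₁w₂} + {v₂w₁, v₂w₂, u₂₁uℓtℓ}. Then M₁(H₄) < M₁(H₃). -/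
/-!
Operation II changes vertex degrees only at `v`, which loses the edge `vv₂`, and at the pendant
vertex `z`, which gains the edge `u₂₁z`: each of `v₂`, `u₂₁`, `w₁`, `w₂` loses exactly as many
edges as it gains. Hence `M₁(H₄) - M₁(H₃) = ((d(v) - 1)² - d(v)²) + (2² - 1²) = 4 - 2 d(v)`,
which is negative because `d(v) ≥ 3`.
-/

open scoped Classical

/-- The first Zagreb index: the sum of the squares of the vertex degrees. -/
noncomputable def zagrebM1 {V : Type*} [Fintype V] (G : SimpleGraph V) : ℕ :=
  ∑ v : V, G.degree v ^ 2

open Finset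

namespace SimpleGraph

variable {V : Type*}

theorem eq_or_eq_of_adj_of_degree_eq_two {G : SimpleGraph V} {a b c d : V}
    [Fintype (G.neighborSet a)] (h : G.degree a = 2) (hb : G.Adj a b) (hc : G.Adj a c)
    (hbc : b ≠ c) (hd : G.Adj a d) : d = b ∨ d = c := by
  have hN : G.neighborFinset a = {b, c} :=
    (eq_of_subset_of_card_le (by simp [insert_subset_iff, hb, hc])
      (by rw [card_neighborFinset_eq_degree, h, card_pair hbc])).symm
  simpa [hN] using (G.mem_neighborFinset a d).2 hd

namespace Walk

theorem IsPath.eq_or_eq_of_adj_getVert_succ {G : SimpleGraph V} {a b d : V} {p : G.Walk a b}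
    (hp : p.IsPath) {i : ℕ} (hi : i + 2 ≤ p.length)
    [Fintype (G.neighborSet (p.getVert (i + 1)))] (hdeg : G.degree (p.getVert (i + 1)) = 2)
    (hd : G.Adj (p.getVert (i + 1)) d) : d = p.getVert i ∨ d = p.getVert (i + 2) :=
  eq_or_eq_of_adj_of_degree_eq_two hdeg (p.adj_getVert_succ (by omega)).symm
    (p.adj_getVert_succ (by omega))
    (hp.getVert_injOn.ne (show i ≤ p.length by omega) (show i + 2 ≤ p.length from hi)
      (by omega)) hd

theorem mem_support_of_adj_of_degree_eq_one {G : SimpleGraph V} {a b y : V} (p : G.Walk a b)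
    (hp : ¬p.Nil) [Fintype (G.neighborSet b)] (hb : G.degree b = 1) (hy : G.Adj b y) :
    y ∈ p.support := by
  obtain rfl := (degree_eq_one_iff_existsUnique_adj.1 hb).unique hy (p.adj_penultimate hp).symm
  exact p.getVert_mem_support _

end Walk

theorem card_filter_mem_operationII_add {v v₂ u w₁ w₂ z : V}
    (hnd : [v, v₂, u, w₁, w₂, z].Nodup) (a : V) :
    #{e ∈ ({s(v, v₂), s(u, v₂), s(w₁, w₂)} : Finset (Sym2 V)) | a ∈ e} +
        (if a = z then 1 else 0) =
      #{e ∈ ({s(v₂, w₁), s(v₂, w₂), s(u, z)} : Finset (Sym2 V)) | a ∈ e} +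
        (if a = v then 1 else 0) := by
  simp only [List.nodup_cons, List.mem_cons, List.not_mem_nil, List.nodup_nil, or_false,
    not_or] at hnd
  simp only [filter_insert, filter_singleton, Sym2.mem_iff]
  obtain rfl | hv := eq_or_ne a v; · simp_all
  obtain rfl | hv₂ := eq_or_ne a v₂; · simp_all
  obtain rfl | hu := eq_or_ne a u; · simp_all
  obtain rfl | hw₁ := eq_or_ne a w₁; · simp_all
  obtain rfl | hw₂ := eq_or_ne a w₂; · simp_all
  obtain rfl | hz := eq_or_ne a z; · simp_all
  simp_all

variable [Fintype V]

theorem degree_add_card_filter_mem_of_edgeSet_eq {G G' : SimpleGraph V} {R A : Finset (Sym2 V)}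
    (hR : (R : Set (Sym2 V)) ⊆ G.edgeSet) (hA : Disjoint (A : Set (Sym2 V)) G.edgeSet)
    (hG' : G'.edgeSet = G.edgeSet \ R ∪ A) (a : V) :
    G'.degree a + #{e ∈ R | a ∈ e} = G.degree a + #{e ∈ A | a ∈ e} := by
  have hE : G'.edgeFinset = G.edgeFinset \ R ∪ A := by
    rw [← coe_inj, coe_union, coe_sdiff, coe_edgeFinset, coe_edgeFinset, hG']
  have hRE : R ⊆ G.edgeFinset := fun e he => mem_edgeFinset.2 (hR he)
  have hAE : Disjoint (G.edgeFinset \ R) A := by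
    rw [← disjoint_coe, coe_sdiff, coe_edgeFinset]
    exact (hA.mono_right Set.sdiff_subset).symm
  have hsplit :
      #{e ∈ G.edgeFinset | a ∈ e} = #{e ∈ G.edgeFinset \ R | a ∈ e} + #{e ∈ R | a ∈ e} := by
    rw [← card_union_of_disjoint (disjoint_filter_filter sdiff_disjoint), ← filter_union,
      sdiff_union_of_subset hRE]
  rw [← card_incidenceFinset_eq_degree, ← card_incidenceFinset_eq_degree,
    incidenceFinset_eq_filter, incidenceFinset_eq_filter, hE, filter_union,
    card_union_of_disjoint (disjoint_filter_filter hAE), hsplit]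
  ring

theorem zagrebM1_add_of_degree_add {G G' : SimpleGraph V} {v z : V} (hvz : v ≠ z)
    (h : ∀ a, G'.degree a + (if a = v then 1 else 0) = G.degree a + (if a = z then 1 else 0)) :
    zagrebM1 G' + 2 * G.degree v = zagrebM1 G + 2 * G.degree z + 2 := by
  have hsq (a : V) : G'.degree a ^ 2 + (if a = v then 2 * G.degree v else 0) =
      G.degree a ^ 2 + ((if a = v then 1 else 0) + if a = z then 2 * G.degree z + 1 else 0) := by
    have ha := h a
    by_cases hav : a = v
    · subst hav
      simp only [if_neg hvz, if_true, add_zero] at ha ⊢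
      rw [← ha]
      ring
    by_cases haz : a = z
    · subst haz
      simp only [if_neg hav, if_true, add_zero, zero_add] at ha ⊢
      rw [ha]
      ring
    simp only [if_neg hav, if_neg haz, add_zero] at ha ⊢
    rw [ha]
  have hsum := sum_congr rfl fun a (_ : a ∈ univ) => hsq a
  simp only [sum_add_distrib, sum_ite_eq', mem_univ, if_true] at hsum
  rw [zagrebM1, zagrebM1, hsum]
  ring

theorem zagrebM1_operationII_add {G G' : SimpleGraph V} {v v₂ u w₁ w₂ z : V}
    (hnd : [v, v₂, u, w₁, w₂, z].Nodup) (hvv₂ : G.Adj v v₂) (huv₂ : G.Adj u v₂)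
    (hw : G.Adj w₁ w₂) (hv₂w₁ : ¬G.Adj v₂ w₁) (hv₂w₂ : ¬G.Adj v₂ w₂) (huz : ¬G.Adj u z)
    (hG' : G' = fromEdgeSet (G.edgeSet \ {s(v, v₂), s(u, v₂), s(w₁, w₂)} ∪
        {s(v₂, w₁), s(v₂, w₂), s(u, z)})) :
    zagrebM1 G' + 2 * G.degree v = zagrebM1 G + 2 * G.degree z + 2 := by
  refine zagrebM1_add_of_degree_add (by simp_all) fun a => ?_
  have hdeg := degree_add_card_filter_mem_of_edgeSet_eq (G := G) (G' := G')
    (R := {s(v, v₂), s(u, v₂), s(w₁, w₂)}) (A := {s(v₂, w₁), s(v₂, w₂), s(u, z)})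
    (by simp [Set.insert_subset_iff, hvv₂, huv₂, hw]) (by simp [hv₂w₁, hv₂w₂, huz]) ?_ a
  · have := card_filter_mem_operationII_add hnd a
    omega
  push_cast
  refine (edgeSet_eq_iff _ _).2 ⟨hG', Set.disjoint_union_left.2 ⟨?_, ?_⟩⟩
  · exact (Set.subset_compl_iff_disjoint_right.1 G.edgeSet_subset_compl_diagSet).mono_left
      Set.sdiff_subset
  · simp_all [Set.disjoint_left]

end SimpleGraph

open SimpleGraph

theorem M1_operationII_lt_general {V : Type*} [Fintype V] (H₃ : SimpleGraph V)
    (v x z w₁ w₂ : V)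
    (hdeg : 3 ≤ H₃.degree v)
    (p : H₃.Walk v x) (q : H₃.Walk v z)
    (hp : p.IsPath) (hq : q.IsPath)
    (hplen : 2 ≤ p.length) (hqlen : 2 ≤ q.length)
    (hqz : H₃.degree z = 1)
    (hpint : ∀ y ∈ p.support, y ≠ v → y ≠ x → H₃.degree y = 2)
    (hmeet : ∀ y, y ∈ p.support → y ∈ q.support → y = v)
    (hcyc : ∃ (c₀ : V) (c : H₃.Walk c₀ c₀), c.IsCycle ∧ s(w₁, w₂) ∈ c.edges)
    (hw₁p : w₁ ∉ p.support) (hw₂p : w₂ ∉ p.support)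
    (hw₁q : w₁ ∉ q.support) (hw₂q : w₂ ∉ q.support)
    (H₄ : SimpleGraph V)
    (hH₄ : H₄ = SimpleGraph.fromEdgeSet
      ((H₃.edgeSet \ {s(v, p.getVert 1), s(p.getVert 2, p.getVert 1), s(w₁, w₂)})
        ∪ {s(p.getVert 1, w₁), s(p.getVert 1, w₂), s(p.getVert 2, z)})) :
    zagrebM1 H₄ < zagrebM1 H₃ := by
  obtain ⟨_, c, -, hc⟩ := hcyc
  have hw : H₃.Adj w₁ w₂ := c.adj_of_mem_edges hc
  have hvv₂ : H₃.Adj v (p.getVert 1) := by simpa using p.adj_getVert_succ (i := 0) (by omega)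
  have huv₂ : H₃.Adj (p.getVert 2) (p.getVert 1) := (p.adj_getVert_succ (by omega)).symm
  have huv : p.getVert 2 ≠ v := by rw [Ne, hp.getVert_eq_start_iff (by omega)]; omega
  have hv₂x : p.getVert 1 ≠ x := by rw [Ne, hp.getVert_eq_end_iff (by omega)]; omega
  have hzv : z ≠ v := by rw [← q.getVert_length, Ne, hq.getVert_eq_start_iff le_rfl]; omega
  have hv₂ (d : V) (hd : H₃.Adj (p.getVert 1) d) : d ∈ p.support := by
    rcases hp.eq_or_eq_of_adj_getVert_succ (i := 0) hplen
      (hpint _ (p.getVert_mem_support 1) hvv₂.ne.symm hv₂x) hd with rfl | rfl <;>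
    exact p.getVert_mem_support _
  have huz : ¬H₃.Adj (p.getVert 2) z := fun h => huv <| hmeet _ (p.getVert_mem_support 2)
    (q.mem_support_of_adj_of_degree_eq_one (Walk.not_nil_iff_lt_length.2 (by omega)) hqz h.symm)
  have hnd : [v, p.getVert 1, p.getVert 2, w₁, w₂, z].Nodup := by
    have hzp : z ∉ p.support := fun h => hzv (hmeet z h q.end_mem_support)
    have := p.start_mem_support
    have := p.getVert_mem_support 1
    have := p.getVert_mem_support 2
    have := q.end_mem_support
    simp only [List.nodup_cons, List.mem_cons, List.not_mem_nil, List.nodup_nil, or_false,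
      not_or, not_false_eq_true, and_true]
    refine ⟨⟨hvv₂.ne, huv.symm, ?_, ?_, hzv.symm⟩, ⟨huv₂.ne.symm, ?_, ?_, ?_⟩, ⟨?_, ?_, ?_⟩,
      ⟨hw.ne, ?_⟩, ?_⟩ <;> rintro rfl <;> contradiction
  have := zagrebM1_operationII_add hnd hvv₂ huv₂ hw (fun h => hw₁p (hv₂ _ h))
    (fun h => hw₂p (hv₂ _ h)) huz hH₄
  omega

/-- Operation II: `v` has degree at least 3 and two pendant paths `p` and `q`
(each of length at least 2) attached at `v`, meeting only in `v`; all internal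
vertices of the paths have degree 2 in `H₃` and the far endpoints are pendant.
If `w₁w₂` is an edge lying on a cycle of `H₃` (so `w₁, w₂` are off the pendant
paths), `v₂` and `u₂₁` are the second and third vertices of `p`, and `z` is the
pendant endpoint of `q`, then
`H₄ = H₃ - {vv₂, u₂₁v₂, w₁w₂} + {v₂w₁, v₂w₂, u₂₁z}` satisfies `M₁(H₄) < M₁(H₃)`. -/
theorem M1_operationII_lt {V : Type*} [Fintype V] (H₃ : SimpleGraph V)
    (hconn : H₃.Connected) (v x z w₁ w₂ : V)
    (hdeg : 3 ≤ H₃.degree v)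
    (p : H₃.Walk v x) (q : H₃.Walk v z)
    (hp : p.IsPath) (hq : q.IsPath)
    (hplen : 2 ≤ p.length) (hqlen : 2 ≤ q.length)
    (hpx : H₃.degree x = 1) (hqz : H₃.degree z = 1)
    (hpint : ∀ y ∈ p.support, y ≠ v → y ≠ x → H₃.degree y = 2)
    (hqint : ∀ y ∈ q.support, y ≠ v → y ≠ z → H₃.degree y = 2)
    (hmeet : ∀ y, y ∈ p.support → y ∈ q.support → y = v)
    (hcyc : ∃ (c₀ : V) (c : H₃.Walk c₀ c₀), c.IsCycle ∧ s(w₁, w₂) ∈ c.edges)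
    (hw₁p : w₁ ∉ p.support) (hw₂p : w₂ ∉ p.support)
    (hw₁q : w₁ ∉ q.support) (hw₂q : w₂ ∉ q.support)
    (H₄ : SimpleGraph V)
    (hH₄ : H₄ = SimpleGraph.fromEdgeSet
      ((H₃.edgeSet \ {s(v, p.getVert 1), s(p.getVert 2, p.getVert 1), s(w₁, w₂)})
        ∪ {s(p.getVert 1, w₁), s(p.getVert 1, w₂), s(p.getVert 2, z)})) :
    zagrebM1 H₄ < zagrebM1 H₃ :=
  M1_operationII_lt_general H₃ v x z w₁ w₂ hdeg p q hp hq hplen hqlen hqz hpint hmeet hcyc hw₁p hw₂p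
    hw₁q hw₂q H₄ hH₄
end

section
/- Let H₃ be a connected simple graph containing a vertex v with d(v) ≥ 3 that has two pendant paths each of length at least 2: a pendant path v v₂ u₂₁ … u₂t₂ and a pendant path v vℓ … uℓ₁ uℓtℓ (so v₂ has exactly the two neighbors v and u₂₁, all internal vertices of the paths have degree 2, and u₂t₂ and uℓtℓ are pendant vertices). Let w₁w₂ be an edge lying on a cycle of H₃, and let H₄ = H₃ − {vv₂, u₂₁v₂, w₁w₂} + {v₂w₁, v₂w₂, u₂₁uℓtℓ}. Then M₂(H₄) < M₂(H₃). -/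
open scoped Classical

/-- The second Zagreb index: the sum over all edges of the product of the
degrees of the two endpoints. -/
noncomputable def zagrebM2 {V : Type*} [Fintype V] (G : SimpleGraph V) : ℕ :=
  ∑ e ∈ G.edgeFinset,
    Sym2.lift ⟨fun x y => G.degree x * G.degree y, fun _ _ => Nat.mul_comm _ _⟩ e

/-!
Operation II changes only two degrees: `d(v)` drops by one and the pendant vertex `z` gets
degree 2. The removed edges `vv₂, u₂₁v₂, w₁w₂` weigh `2 d(v) + 2 d(u₂₁) + d(w₁) d(w₂)`, the added
edges `v₂w₁, v₂w₂, u₂₁z` weigh `2 d(w₁) + 2 d(w₂) + 2 d(u₂₁)`. Among the kept edges only the one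
at `z` gains (by 2), while every kept edge at `v` loses at least the degree of its other end.
As `(d(w₁) - 2)(d(w₂) - 2) ≥ 0` and `d(v) ≥ 3`, the total strictly decreases.
-/

open Finset

namespace SimpleGraph

variable {V : Type*}

def operationII (G : SimpleGraph V) (v v₂ u z w₁ w₂ : V) : SimpleGraph V :=
  fromEdgeSet ((G.edgeSet \ {s(v, v₂), s(u, v₂), s(w₁, w₂)}) ∪ {s(v₂, w₁), s(v₂, w₂), s(u, z)})

variable [Fintype V]

lemma Walk.IsCycle.two_le_degree_of_mem_support {G : SimpleGraph V} {u v : V} {c : G.Walk u u}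
    (hc : c.IsCycle) (hv : v ∈ c.support) : 2 ≤ G.degree v := by
  rw [← hc.ncard_neighborSet_toSubgraph_eq_two hv, ← card_neighborSet_eq_degree,
    ← Set.toFinset_card, ← Set.ncard_eq_toFinset_card']
  exact Set.ncard_le_ncard (c.toSubgraph.neighborSet_subset v)

lemma degree_add_card_filter_mem {G G' : SimpleGraph V} {R A : Finset (Sym2 V)}
    (hR : R ⊆ G.edgeFinset) (hA : Disjoint G.edgeFinset A)
    (h : G'.edgeFinset = G.edgeFinset \ R ∪ A) (y : V) :
    G'.degree y + #{e ∈ R | y ∈ e} = G.degree y + #{e ∈ A | y ∈ e} := by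
  simp only [← card_incidenceFinset_eq_degree, incidenceFinset_eq_filter, h, filter_union]
  rw [card_union_of_disjoint (disjoint_filter_filter (hA.mono_left sdiff_subset)),
    add_right_comm, ← card_union_of_disjoint (disjoint_filter_filter sdiff_disjoint),
    ← filter_union, sdiff_union_of_subset hR]

noncomputable def zagrebWeight (G : SimpleGraph V) : Sym2 V → ℕ :=
  Sym2.lift ⟨fun x y => G.degree x * G.degree y, fun _ _ => Nat.mul_comm _ _⟩

lemma zagrebM2_eq_sum (G : SimpleGraph V) :
    zagrebM2 G = ∑ e ∈ G.edgeFinset, G.zagrebWeight e := rfl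

@[simp]
lemma zagrebWeight_mk (G : SimpleGraph V) (a b : V) :
    G.zagrebWeight s(a, b) = G.degree a * G.degree b := rfl

lemma zagrebWeight_le_of_degree_le {G G' : SimpleGraph V} {e : Sym2 V}
    (h : ∀ y ∈ e, G'.degree y ≤ G.degree y) : G'.zagrebWeight e ≤ G.zagrebWeight e := by
  induction e using Sym2.ind with
  | _ a b => exact Nat.mul_le_mul (h a (Sym2.mem_mk_left a b)) (h b (Sym2.mem_mk_right a b))

/-- The local configuration of Operation II: `v v₂ u` starts a pendant path at `v` (`u` is the
paper's `u₂₁`), `z' z` ends another one (`z` is `uℓtℓ`), and `w₁ w₂` is an edge on a cycle. -/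
structure OperationIIConfig (G : SimpleGraph V) (v v₂ u z z' w₁ w₂ : V) : Prop where
  adj_v_v₂ : G.Adj v v₂
  adj_v₂_u : G.Adj v₂ u
  adj_w₁_w₂ : G.Adj w₁ w₂
  adj_z'_z : G.Adj z' z
  three_le_degree_v : 3 ≤ G.degree v
  degree_v₂ : G.degree v₂ = 2
  two_le_degree_w₁ : 2 ≤ G.degree w₁
  two_le_degree_w₂ : 2 ≤ G.degree w₂
  degree_z : G.degree z = 1
  degree_z' : G.degree z' = 2
  v_ne_u : v ≠ u
  u_ne_z : u ≠ z
  u_ne_z' : u ≠ z'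
  z'_ne_v : z' ≠ v
  w₁_ne_v : w₁ ≠ v
  w₁_ne_v₂ : w₁ ≠ v₂
  w₁_ne_u : w₁ ≠ u
  w₂_ne_v : w₂ ≠ v
  w₂_ne_v₂ : w₂ ≠ v₂
  w₂_ne_u : w₂ ≠ u

namespace OperationIIConfig

variable {G : SimpleGraph V} {v v₂ u z z' w₁ w₂ : V}

lemma z_ne_v (h : OperationIIConfig G v v₂ u z z' w₁ w₂) : z ≠ v :=
  ne_of_apply_ne (G.degree ·) (by have := h.three_le_degree_v; rw [h.degree_z]; omega)

lemma z_ne_v₂ (h : OperationIIConfig G v v₂ u z z' w₁ w₂) : z ≠ v₂ :=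
  ne_of_apply_ne (G.degree ·) (by rw [h.degree_z, h.degree_v₂]; omega)

lemma z_ne_w₁ (h : OperationIIConfig G v v₂ u z z' w₁ w₂) : z ≠ w₁ :=
  ne_of_apply_ne (G.degree ·) (by have := h.two_le_degree_w₁; rw [h.degree_z]; omega)

lemma z_ne_w₂ (h : OperationIIConfig G v v₂ u z z' w₁ w₂) : z ≠ w₂ :=
  ne_of_apply_ne (G.degree ·) (by have := h.two_le_degree_w₂; rw [h.degree_z]; omega)

lemma adj_z_iff (h : OperationIIConfig G v v₂ u z z' w₁ w₂) {y : V} : G.Adj z y ↔ y = z' := by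
  obtain ⟨t, ht⟩ := card_eq_one.mp (h.degree_z ▸ G.card_neighborFinset_eq_degree z)
  have hz' : z' ∈ G.neighborFinset z := by simpa using h.adj_z'_z.symm
  rw [ht, mem_singleton] at hz'
  rw [← mem_neighborFinset, ht, mem_singleton, hz']

lemma adj_v₂_iff (h : OperationIIConfig G v v₂ u z z' w₁ w₂) {y : V} :
    G.Adj v₂ y ↔ y = v ∨ y = u := by
  have hN : G.neighborFinset v₂ = {v, u} := by
    refine (eq_of_subset_of_card_le ?_ ?_).symm
    · simp [insert_subset_iff, h.adj_v_v₂.symm, h.adj_v₂_u]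
    · rw [card_neighborFinset_eq_degree, h.degree_v₂, card_pair h.v_ne_u]
  rw [← mem_neighborFinset, hN, mem_insert, mem_singleton]

lemma edgeFinset_operationII (h : OperationIIConfig G v v₂ u z z' w₁ w₂) :
    (G.operationII v v₂ u z w₁ w₂).edgeFinset =
      G.edgeFinset \ {s(v, v₂), s(u, v₂), s(w₁, w₂)} ∪ {s(v₂, w₁), s(v₂, w₂), s(u, z)} := by
  ext e
  rw [mem_edgeFinset]
  simp only [operationII, edgeSet_fromEdgeSet, Set.mem_sdiff, Set.mem_union, Sym2.mem_diagSet,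
    Set.mem_insert_iff, Set.mem_singleton_iff, mem_union, mem_sdiff, mem_edgeFinset, mem_insert,
    mem_singleton]
  refine and_iff_left_of_imp ?_
  rintro (⟨he, -⟩ | rfl | rfl | rfl)
  · exact G.not_isDiag_of_mem_edgeSet he
  all_goals simp [h.w₁_ne_v₂.symm, h.w₂_ne_v₂.symm, h.u_ne_z]

lemma removed_subset_edgeFinset (h : OperationIIConfig G v v₂ u z z' w₁ w₂) :
    {s(v, v₂), s(u, v₂), s(w₁, w₂)} ⊆ G.edgeFinset := by
  simp [insert_subset_iff, h.adj_v_v₂, h.adj_v₂_u.symm, h.adj_w₁_w₂]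

lemma disjoint_edgeFinset_added (h : OperationIIConfig G v v₂ u z z' w₁ w₂) :
    Disjoint G.edgeFinset {s(v₂, w₁), s(v₂, w₂), s(u, z)} := by
  simp [h.adj_v₂_iff, h.adj_z_iff, G.adj_comm u z, h.w₁_ne_v, h.w₁_ne_u, h.w₂_ne_v, h.w₂_ne_u,
    h.u_ne_z']

lemma degree_operationII_add_card (h : OperationIIConfig G v v₂ u z z' w₁ w₂) (y : V) :
    (G.operationII v v₂ u z w₁ w₂).degree y + #{e ∈ {s(v, v₂), s(u, v₂), s(w₁, w₂)} | y ∈ e} =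
      G.degree y + #{e ∈ {s(v₂, w₁), s(v₂, w₂), s(u, z)} | y ∈ e} :=
  degree_add_card_filter_mem h.removed_subset_edgeFinset h.disjoint_edgeFinset_added
    h.edgeFinset_operationII y

lemma degree_operationII_v (h : OperationIIConfig G v v₂ u z z' w₁ w₂) :
    (G.operationII v v₂ u z w₁ w₂).degree v + 1 = G.degree v := by
  have := h.degree_operationII_add_card v
  simpa [filter_insert, filter_singleton, h.adj_v_v₂.ne, h.v_ne_u, h.w₁_ne_v.symm,
    h.w₂_ne_v.symm, h.z_ne_v.symm] using this

lemma degree_operationII_z (h : OperationIIConfig G v v₂ u z z' w₁ w₂) :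
    (G.operationII v v₂ u z w₁ w₂).degree z = 2 := by
  have := h.degree_operationII_add_card z
  simpa [filter_insert, filter_singleton, h.z_ne_v, h.z_ne_v₂, h.u_ne_z.symm, h.z_ne_w₁,
    h.z_ne_w₂, h.degree_z] using this

lemma degree_operationII_of_ne (h : OperationIIConfig G v v₂ u z z' w₁ w₂) {y : V}
    (hyv : y ≠ v) (hyz : y ≠ z) :
    (G.operationII v v₂ u z w₁ w₂).degree y = G.degree y := by
  have := h.degree_operationII_add_card y
  by_cases hv₂ : y = v₂
  · subst hv₂
    simpa [filter_insert, filter_singleton, hyv, hyz, h.adj_v₂_u.ne, h.w₁_ne_v₂.symm,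
      h.w₂_ne_v₂.symm, h.adj_w₁_w₂.ne, h.v_ne_u] using this
  by_cases hu : y = u
  · subst hu
    simpa [filter_insert, filter_singleton, hyv, hyz, hv₂, h.w₁_ne_u.symm, h.w₂_ne_u.symm,
      add_assoc] using this
  by_cases hw₁ : y = w₁
  · subst hw₁
    simpa [filter_insert, filter_singleton, hyv, hyz, hv₂, hu, h.adj_w₁_w₂.ne] using this
  by_cases hw₂ : y = w₂
  · subst hw₂
    simpa [filter_insert, filter_singleton, hyv, hyz, hv₂, hu, h.adj_w₁_w₂.ne.symm] using this
  simpa [filter_insert, filter_singleton, hyv, hyz, hv₂, hu, hw₁, hw₂] using this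

lemma degree_operationII_le (h : OperationIIConfig G v v₂ u z z' w₁ w₂) {y : V} (hyz : y ≠ z) :
    (G.operationII v v₂ u z w₁ w₂).degree y ≤ G.degree y := by
  by_cases hyv : y = v
  · subst hyv
    have := h.degree_operationII_v
    omega
  · exact (h.degree_operationII_of_ne hyv hyz).le

lemma sum_zagrebWeight_kept_lt (h : OperationIIConfig G v v₂ u z z' w₁ w₂) :
    ∑ e ∈ G.edgeFinset \ {s(v, v₂), s(u, v₂), s(w₁, w₂)},
        (G.operationII v v₂ u z w₁ w₂).zagrebWeight e <
      ∑ e ∈ G.edgeFinset \ {s(v, v₂), s(u, v₂), s(w₁, w₂)}, G.zagrebWeight e + 2 := by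
  set S := G.edgeFinset \ {s(v, v₂), s(u, v₂), s(w₁, w₂)}
  have hzS : s(z', z) ∈ S := by
    simp [S, h.adj_z'_z, h.z_ne_v, h.z_ne_v₂, h.u_ne_z.symm, h.z_ne_w₁, h.z_ne_w₂]
  obtain ⟨b, hb, hbv₂⟩ := exists_mem_ne (s := G.neighborFinset v)
    (by have := h.three_le_degree_v; rw [card_neighborFinset_eq_degree]; omega) v₂
  rw [mem_neighborFinset] at hb
  have hbz : b ≠ z := by
    rintro rfl
    exact h.z'_ne_v (h.adj_z_iff.mp hb.symm).symm
  have hvbS : s(v, b) ∈ S.erase s(z', z) := by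
    simp [S, hb, hbv₂, h.adj_v_v₂.ne, h.v_ne_u, h.w₁_ne_v.symm, h.w₂_ne_v.symm, h.z'_ne_v.symm,
      h.z_ne_v.symm]
  have hle : ∀ e ∈ S.erase s(z', z),
      (G.operationII v v₂ u z w₁ w₂).zagrebWeight e ≤ G.zagrebWeight e := by
    intro e he
    refine zagrebWeight_le_of_degree_le fun y hy => h.degree_operationII_le ?_
    rintro rfl
    obtain ⟨t, rfl⟩ := Sym2.mem_iff_exists.mp hy
    simp only [S, mem_erase, mem_sdiff, mem_edgeFinset, mem_edgeSet, h.adj_z_iff] at he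
    exact he.1 (by rw [he.2.1, Sym2.eq_swap])
  have hlt : (G.operationII v v₂ u z w₁ w₂).zagrebWeight s(v, b) < G.zagrebWeight s(v, b) := by
    simp only [zagrebWeight_mk]
    exact Nat.mul_lt_mul_of_lt_of_le (by have := h.degree_operationII_v; omega)
      (h.degree_operationII_le hbz) (G.degree_pos_iff_exists_adj b |>.mpr ⟨v, hb.symm⟩)
  have hzz' :
      (G.operationII v v₂ u z w₁ w₂).zagrebWeight s(z', z) ≤ G.zagrebWeight s(z', z) + 2 := by
    have := h.degree_operationII_le h.adj_z'_z.ne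
    simp only [zagrebWeight_mk, h.degree_operationII_z, h.degree_z, h.degree_z'] at this ⊢
    omega
  rw [← add_sum_erase S _ hzS, ← add_sum_erase S _ hzS]
  have := sum_lt_sum hle ⟨_, hvbS, hlt⟩
  omega

theorem zagrebM2_operationII_lt (h : OperationIIConfig G v v₂ u z z' w₁ w₂) :
    zagrebM2 (G.operationII v v₂ u z w₁ w₂) < zagrebM2 G := by
  have hR : ∑ e ∈ {s(v, v₂), s(u, v₂), s(w₁, w₂)}, G.zagrebWeight e =
      G.degree v * 2 + G.degree u * 2 + G.degree w₁ * G.degree w₂ := by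
    simp [h.degree_v₂, h.adj_v_v₂.ne, h.v_ne_u, h.w₁_ne_v.symm, h.w₂_ne_v.symm, h.w₁_ne_u.symm,
      h.w₂_ne_u.symm, add_assoc]
  have hA : ∑ e ∈ {s(v₂, w₁), s(v₂, w₂), s(u, z)}, (G.operationII v v₂ u z w₁ w₂).zagrebWeight e =
      2 * G.degree w₁ + 2 * G.degree w₂ + G.degree u * 2 := by
    rw [sum_insert (by simp [h.adj_w₁_w₂.ne, h.w₁_ne_v₂, h.adj_v₂_u.ne, h.z_ne_v₂.symm]),
      sum_insert (by simp [h.adj_v₂_u.ne, h.z_ne_v₂.symm]), sum_singleton]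
    simp only [zagrebWeight_mk, h.degree_operationII_z,
      h.degree_operationII_of_ne h.adj_v_v₂.ne.symm h.z_ne_v₂.symm, h.degree_v₂,
      h.degree_operationII_of_ne h.w₁_ne_v h.z_ne_w₁.symm,
      h.degree_operationII_of_ne h.w₂_ne_v h.z_ne_w₂.symm,
      h.degree_operationII_of_ne h.v_ne_u.symm h.u_ne_z]
    ring
  rw [zagrebM2_eq_sum, zagrebM2_eq_sum, h.edgeFinset_operationII,
    sum_union (h.disjoint_edgeFinset_added.mono_left sdiff_subset),
    ← sum_sdiff h.removed_subset_edgeFinset, hR, hA]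
  have := h.sum_zagrebWeight_kept_lt
  nlinarith [h.three_le_degree_v, h.two_le_degree_w₁, h.two_le_degree_w₂]

end OperationIIConfig

end SimpleGraph

theorem M2_operationII_lt_general {V : Type*} [Fintype V] (H₃ : SimpleGraph V)
    (v x z w₁ w₂ : V)
    (hdeg : 3 ≤ H₃.degree v)
    (p : H₃.Walk v x) (q : H₃.Walk v z)
    (hp : p.IsPath) (hq : q.IsPath)
    (hplen : 2 ≤ p.length) (hqlen : 2 ≤ q.length)
    (hqz : H₃.degree z = 1)
    (hpint : ∀ y ∈ p.support, y ≠ v → y ≠ x → H₃.degree y = 2)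
    (hqint : ∀ y ∈ q.support, y ≠ v → y ≠ z → H₃.degree y = 2)
    (hmeet : ∀ y, y ∈ p.support → y ∈ q.support → y = v)
    (hcyc : ∃ (c₀ : V) (c : H₃.Walk c₀ c₀), c.IsCycle ∧ s(w₁, w₂) ∈ c.edges)
    (hw₁p : w₁ ∉ p.support) (hw₂p : w₂ ∉ p.support)
    (H₄ : SimpleGraph V)
    (hH₄ : H₄ = SimpleGraph.fromEdgeSet
      ((H₃.edgeSet \ {s(v, p.getVert 1), s(p.getVert 2, p.getVert 1), s(w₁, w₂)})
        ∪ {s(p.getVert 1, w₁), s(p.getVert 1, w₂), s(p.getVert 2, z)})) :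
    zagrebM2 H₄ < zagrebM2 H₃ := by
  obtain ⟨c₀, c, hc, hw⟩ := hcyc
  have hu : p.getVert 2 ≠ v := by rw [Ne, hp.getVert_eq_start_iff (by omega)]; omega
  have hu_q (j : ℕ) : p.getVert 2 ≠ q.getVert j := fun e =>
    hu (hmeet _ (p.getVert_mem_support 2) (e ▸ q.getVert_mem_support j))
  have hq' : ¬ q.Nil := SimpleGraph.Walk.not_nil_iff_lt_length.mpr (by omega)
  subst hH₄
  refine SimpleGraph.OperationIIConfig.zagrebM2_operationII_lt (z' := q.penultimate)
    { adj_v_v₂ := by simpa using p.adj_getVert_succ (i := 0) (by omega)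
      adj_v₂_u := p.adj_getVert_succ (i := 1) (by omega)
      adj_w₁_w₂ := c.adj_of_mem_edges hw
      adj_z'_z := q.adj_penultimate hq'
      three_le_degree_v := hdeg
      degree_v₂ := hpint _ (p.getVert_mem_support 1)
        (by rw [Ne, hp.getVert_eq_start_iff (by omega)]; omega)
        (by rw [Ne, hp.getVert_eq_end_iff (by omega)]; omega)
      two_le_degree_w₁ := hc.two_le_degree_of_mem_support (c.fst_mem_support_of_mem_edges hw)
      two_le_degree_w₂ := hc.two_le_degree_of_mem_support (c.snd_mem_support_of_mem_edges hw)
      degree_z := hqz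
      degree_z' := hqint _ (q.getVert_mem_support _)
        (by rw [Ne, hq.getVert_eq_start_iff (by omega)]; omega)
        (by rw [Ne, hq.getVert_eq_end_iff (by omega)]; omega)
      v_ne_u := hu.symm
      u_ne_z := by simpa using hu_q q.length
      u_ne_z' := hu_q _
      z'_ne_v := by rw [Ne, hq.getVert_eq_start_iff (by omega)]; omega
      w₁_ne_v := fun e => hw₁p (e ▸ p.start_mem_support)
      w₁_ne_v₂ := fun e => hw₁p (e ▸ p.getVert_mem_support 1)
      w₁_ne_u := fun e => hw₁p (e ▸ p.getVert_mem_support 2)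
      w₂_ne_v := fun e => hw₂p (e ▸ p.start_mem_support)
      w₂_ne_v₂ := fun e => hw₂p (e ▸ p.getVert_mem_support 1)
      w₂_ne_u := fun e => hw₂p (e ▸ p.getVert_mem_support 2) }

/-- Operation II: `v` has degree at least 3 and two pendant paths `p` and `q`
(each of length at least 2) attached at `v`, meeting only in `v`; all internal
vertices of the paths have degree 2 in `H₃` and the far endpoints are pendant.
If `w₁w₂` is an edge lying on a cycle of `H₃` (so `w₁, w₂` are off the pendant
paths), `v₂` and `u₂₁` are the second and third vertices of `p`, and `z` is the
pendant endpoint of `q`, then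
`H₄ = H₃ - {vv₂, u₂₁v₂, w₁w₂} + {v₂w₁, v₂w₂, u₂₁z}` satisfies `M₂(H₄) < M₂(H₃)`. -/
theorem M2_operationII_lt {V : Type*} [Fintype V] (H₃ : SimpleGraph V)
    (hconn : H₃.Connected) (v x z w₁ w₂ : V)
    (hdeg : 3 ≤ H₃.degree v)
    (p : H₃.Walk v x) (q : H₃.Walk v z)
    (hp : p.IsPath) (hq : q.IsPath)
    (hplen : 2 ≤ p.length) (hqlen : 2 ≤ q.length)
    (hpx : H₃.degree x = 1) (hqz : H₃.degree z = 1)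
    (hpint : ∀ y ∈ p.support, y ≠ v → y ≠ x → H₃.degree y = 2)
    (hqint : ∀ y ∈ q.support, y ≠ v → y ≠ z → H₃.degree y = 2)
    (hmeet : ∀ y, y ∈ p.support → y ∈ q.support → y = v)
    (hcyc : ∃ (c₀ : V) (c : H₃.Walk c₀ c₀), c.IsCycle ∧ s(w₁, w₂) ∈ c.edges)
    (hw₁p : w₁ ∉ p.support) (hw₂p : w₂ ∉ p.support)
    (hw₁q : w₁ ∉ q.support) (hw₂q : w₂ ∉ q.support)
    (H₄ : SimpleGraph V)
    (hH₄ : H₄ = SimpleGraph.fromEdgeSet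
      ((H₃.edgeSet \ {s(v, p.getVert 1), s(p.getVert 2, p.getVert 1), s(w₁, w₂)})
        ∪ {s(p.getVert 1, w₁), s(p.getVert 1, w₂), s(p.getVert 2, z)})) :
    zagrebM2 H₄ < zagrebM2 H₃ :=
  M2_operationII_lt_general H₃ v x z w₁ w₂ hdeg p q hp hq hplen hqlen hqz hpint hqint hmeet hcyc
    hw₁p hw₂p H₄ hH₄
end

section
/- Let H₅ be a connected simple graph on at least 6 vertices containing two cycles C₁ and C₂, where C₂ has length at least 4 and is an endblock attached to the rest of H₅ at the vertex w (that is, every vertex of C₂ other than w has degree 2 in H₅, and w has degree at least 3). Let v₁ and v₂ be the two neighbors of w on C₂, let v₀ be the neighbor of v₂ on C₂ other than w, and let u₁u₂ be an edge of the cycle C₁ with u₁, u₂ not on C₂. Let H₆ = H₅ − {v₁w, v₀v₂, u₁u₂} + {u₁v₀, u₂v₁}. Then M₁(H₆) < M₁(H₅). -/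
open scoped Classical

private lemma deg_le_aux {V : Type*} [Fintype V] [DecidableEq V] (G G' : SimpleGraph V)
    [DecidableRel G.Adj] [DecidableRel G'.Adj]
    (x : V) (S T : Finset V) (hS : S ⊆ G.neighborFinset x)
    (hT : T.card ≤ S.card)
    (hsub : G'.neighborFinset x ⊆ (G.neighborFinset x \ S) ∪ T) :
    G'.degree x ≤ G.degree x := by
  have h1 : G'.degree x ≤ (G.neighborFinset x \ S).card + T.card :=
    le_trans (Finset.card_le_card hsub) (Finset.card_union_le _ _)
  have h2 : (G.neighborFinset x \ S).card = (G.neighborFinset x).card - S.card :=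
    Finset.card_sdiff_of_subset hS
  have h3 := Finset.card_le_card hS
  have hd : G.degree x = (G.neighborFinset x).card := rfl
  omega

/-- Operation III: `H₅` is connected on at least 6 vertices, `c₂` is a cycle of
length at least 4 which is an endblock attached at `w` (every vertex of `c₂`
other than `w` has degree 2 in `H₅`, and `w` has degree at least 3), `v₁, v₂`
are the two neighbors of `w` on `c₂`, `v₀` is the neighbor of `v₂` on `c₂` other
than `w`, and `u₁u₂` is an edge of a cycle `c₁` with `u₁, u₂` not on `c₂`. Then
`H₆ = H₅ - {v₁w, v₀v₂, u₁u₂} + {u₁v₀, u₂v₁}` satisfies `M₁(H₆) < M₁(H₅)`. -/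
theorem M1_operationIII_lt {V : Type*} [Fintype V] (H₅ : SimpleGraph V)
    (hconn : H₅.Connected) (hcard : 6 ≤ Fintype.card V)
    (w v₁ v₂ v₀ u₁ u₂ : V)
    (c₂ : H₅.Walk w w) (hc₂ : c₂.IsCycle) (hc₂len : 4 ≤ c₂.length)
    (hend : ∀ x ∈ c₂.support, x ≠ w → H₅.degree x = 2)
    (hw : 3 ≤ H₅.degree w)
    (hv₁ : s(w, v₁) ∈ c₂.edges) (hv₂ : s(w, v₂) ∈ c₂.edges) (hv₁₂ : v₁ ≠ v₂)
    (hv₀ : s(v₂, v₀) ∈ c₂.edges) (hv₀w : v₀ ≠ w)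
    (hcyc : ∃ (c₀ : V) (c₁ : H₅.Walk c₀ c₀), c₁.IsCycle ∧ s(u₁, u₂) ∈ c₁.edges)
    (hu₁ : u₁ ∉ c₂.support) (hu₂ : u₂ ∉ c₂.support)
    (H₆ : SimpleGraph V)
    (hH₆ : H₆ = SimpleGraph.fromEdgeSet
      ((H₅.edgeSet \ {s(v₁, w), s(v₀, v₂), s(u₁, u₂)}) ∪ {s(u₁, v₀), s(u₂, v₁)})) :
    zagrebM1 H₆ < zagrebM1 H₅ := by
  classical
  -- basic adjacency facts
  have haWV₁ : H₅.Adj w v₁ := c₂.adj_of_mem_edges hv₁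
  have haWV₂ : H₅.Adj w v₂ := c₂.adj_of_mem_edges hv₂
  have haV₂V₀ : H₅.Adj v₂ v₀ := c₂.adj_of_mem_edges hv₀
  obtain ⟨c₀, c₁, -, he₁⟩ := hcyc
  have haU : H₅.Adj u₁ u₂ := c₁.adj_of_mem_edges he₁
  -- support membership
  have hwS : w ∈ c₂.support := c₂.start_mem_support
  have hv₁S : v₁ ∈ c₂.support := c₂.snd_mem_support_of_mem_edges hv₁
  have hv₂S : v₂ ∈ c₂.support := c₂.snd_mem_support_of_mem_edges hv₂
  have hv₀S : v₀ ∈ c₂.support := c₂.snd_mem_support_of_mem_edges hv₀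
  -- distinctness
  have nWV₁ : w ≠ v₁ := haWV₁.ne
  have nWV₂ : w ≠ v₂ := haWV₂.ne
  have nV₂V₀ : v₂ ≠ v₀ := haV₂V₀.ne
  have nU : u₁ ≠ u₂ := haU.ne
  have nU₁W : u₁ ≠ w := fun h => hu₁ (h ▸ hwS)
  have nU₁V₁ : u₁ ≠ v₁ := fun h => hu₁ (h ▸ hv₁S)
  have nU₁V₂ : u₁ ≠ v₂ := fun h => hu₁ (h ▸ hv₂S)
  have nU₁V₀ : u₁ ≠ v₀ := fun h => hu₁ (h ▸ hv₀S)
  have nU₂W : u₂ ≠ w := fun h => hu₂ (h ▸ hwS)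
  have nU₂V₁ : u₂ ≠ v₁ := fun h => hu₂ (h ▸ hv₁S)
  have nU₂V₂ : u₂ ≠ v₂ := fun h => hu₂ (h ▸ hv₂S)
  have nU₂V₀ : u₂ ≠ v₀ := fun h => hu₂ (h ▸ hv₀S)
  -- adjacency description of H₆
  have hAdj : ∀ a b : V, H₆.Adj a b →
      (H₅.Adj a b ∧ s(a,b) ≠ s(v₁,w) ∧ s(a,b) ≠ s(v₀,v₂) ∧ s(a,b) ≠ s(u₁,u₂))
      ∨ s(a,b) = s(u₁,v₀) ∨ s(a,b) = s(u₂,v₁) := by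
    intro a b hab
    rw [hH₆, SimpleGraph.fromEdgeSet_adj] at hab
    obtain ⟨hmem, -⟩ := hab
    simp only [Set.mem_union, Set.mem_diff, Set.mem_insert_iff, Set.mem_singleton_iff,
      SimpleGraph.mem_edgeSet] at hmem
    tauto
  -- strict degree drop at w
  have hwlt : H₆.degree w < H₅.degree w := by
    have hsub : H₆.neighborFinset w ⊆ (H₅.neighborFinset w).erase v₁ := by
      intro y hy
      rw [SimpleGraph.mem_neighborFinset] at hy
      rcases hAdj w y hy with ⟨ha, h1, _, _⟩ | h | h
      · rw [Finset.mem_erase, SimpleGraph.mem_neighborFinset]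
        refine ⟨fun hyv => h1 ?_, ha⟩
        subst hyv; exact Sym2.eq_swap
      · rw [Sym2.eq_iff] at h
        rcases h with ⟨h1, h2⟩ | ⟨h1, h2⟩
        · exact absurd h1 (Ne.symm nU₁W)
        · exact absurd h1 (Ne.symm hv₀w)
      · rw [Sym2.eq_iff] at h
        rcases h with ⟨h1, h2⟩ | ⟨h1, h2⟩
        · exact absurd h1 (Ne.symm nU₂W)
        · exact absurd h1 nWV₁
    calc H₆.degree w ≤ ((H₅.neighborFinset w).erase v₁).card := Finset.card_le_card hsub
      _ < (H₅.neighborFinset w).card :=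
          Finset.card_erase_lt_of_mem (by rw [SimpleGraph.mem_neighborFinset]; exact haWV₁)
      _ = H₅.degree w := rfl
  -- pointwise degree bound
  have hle : ∀ x : V, H₆.degree x ≤ H₅.degree x := by
    intro x
    by_cases hxw : x = w
    · exact hxw ▸ hwlt.le
    by_cases hxv₂ : x = v₂
    · rw [hxv₂]
      refine deg_le_aux H₅ H₆ v₂ ∅ ∅ (by simp) le_rfl ?_
      intro y hy
      rw [SimpleGraph.mem_neighborFinset] at hy
      rcases hAdj v₂ y hy with ⟨ha, _, _, _⟩ | h | h
      · simp [SimpleGraph.mem_neighborFinset, ha]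
      · rw [Sym2.eq_iff] at h
        rcases h with ⟨h1, h2⟩ | ⟨h1, h2⟩
        · exact absurd h1 (Ne.symm nU₁V₂)
        · exact absurd h1 nV₂V₀
      · rw [Sym2.eq_iff] at h
        rcases h with ⟨h1, h2⟩ | ⟨h1, h2⟩
        · exact absurd h1 (Ne.symm nU₂V₂)
        · exact absurd h1 (Ne.symm hv₁₂)
    by_cases hxv₁ : x = v₁
    · rw [hxv₁]
      by_cases hvv : v₀ = v₁
      · -- v₀ = v₁ : S = {w, v₂}, T = {u₁, u₂}
        refine deg_le_aux H₅ H₆ v₁ {w, v₂} {u₁, u₂} ?_ ?_ ?_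
        · intro z hz
          rw [SimpleGraph.mem_neighborFinset]
          rcases Finset.mem_insert.1 hz with rfl | hz
          · exact haWV₁.symm
          · rw [Finset.mem_singleton] at hz; subst hz
            exact hvv ▸ haV₂V₀.symm
        · have h1 : ({u₁, u₂} : Finset V).card ≤ 2 :=
            (Finset.card_insert_le _ _).trans (by simp)
          have h2 : ({w, v₂} : Finset V).card = 2 := by
            rw [Finset.card_insert_of_notMem (by simpa using nWV₂), Finset.card_singleton]
          omega
        · intro y hy
          rw [SimpleGraph.mem_neighborFinset] at hy
          rcases hAdj v₁ y hy with ⟨ha, h1, h2, _⟩ | h | h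
          · rw [Finset.mem_union, Finset.mem_sdiff, SimpleGraph.mem_neighborFinset]
            left
            refine ⟨ha, ?_⟩
            simp only [Finset.mem_insert, Finset.mem_singleton]
            rintro (rfl | rfl)
            · exact h1 rfl
            · exact h2 (by rw [hvv])
          · rw [Sym2.eq_iff] at h
            rcases h with ⟨h1, h2⟩ | ⟨h1, h2⟩
            · exact absurd h1 (Ne.symm nU₁V₁)
            · rw [h2]; simp
          · rw [Sym2.eq_iff] at h
            rcases h with ⟨h1, h2⟩ | ⟨h1, h2⟩
            · exact absurd h1 (Ne.symm nU₂V₁)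
            · rw [h2]; simp
      · -- v₀ ≠ v₁ : at v₁, S = {w}, T = {u₂}
        refine deg_le_aux H₅ H₆ v₁ {w} {u₂} ?_ (by simp) ?_
        · intro z hz; rw [Finset.mem_singleton] at hz; subst hz
          rw [SimpleGraph.mem_neighborFinset]; exact haWV₁.symm
        · intro y hy
          rw [SimpleGraph.mem_neighborFinset] at hy
          rcases hAdj v₁ y hy with ⟨ha, h1, _, _⟩ | h | h
          · rw [Finset.mem_union, Finset.mem_sdiff, SimpleGraph.mem_neighborFinset]
            left
            refine ⟨ha, ?_⟩
            rw [Finset.mem_singleton]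
            rintro rfl
            exact h1 rfl
          · rw [Sym2.eq_iff] at h
            rcases h with ⟨h1, h2⟩ | ⟨h1, h2⟩
            · exact absurd h1 (Ne.symm nU₁V₁)
            · exact absurd h1.symm hvv
          · rw [Sym2.eq_iff] at h
            rcases h with ⟨h1, h2⟩ | ⟨h1, h2⟩
            · exact absurd h1 (Ne.symm nU₂V₁)
            · rw [h2]; simp
    by_cases hxv₀ : x = v₀
    · -- x = v₀ ≠ v₁ : S = {v₂}, T = {u₁}
      rw [hxv₀]
      refine deg_le_aux H₅ H₆ v₀ {v₂} {u₁} ?_ (by simp) ?_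
      · intro z hz; rw [Finset.mem_singleton] at hz; subst hz
        rw [SimpleGraph.mem_neighborFinset]; exact haV₂V₀.symm
      · intro y hy
        rw [SimpleGraph.mem_neighborFinset] at hy
        rcases hAdj v₀ y hy with ⟨ha, _, h2, _⟩ | h | h
        · rw [Finset.mem_union, Finset.mem_sdiff, SimpleGraph.mem_neighborFinset]
          left
          refine ⟨ha, ?_⟩
          rw [Finset.mem_singleton]
          rintro rfl
          exact h2 rfl
        · rw [Sym2.eq_iff] at h
          rcases h with ⟨h1, h2⟩ | ⟨h1, h2⟩
          · exact absurd h1 (Ne.symm nU₁V₀)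
          · rw [h2]; simp
        · rw [Sym2.eq_iff] at h
          rcases h with ⟨h1, h2⟩ | ⟨h1, h2⟩
          · exact absurd h1 (Ne.symm nU₂V₀)
          · exact absurd (hxv₀.trans h1) hxv₁
    by_cases hxu₁ : x = u₁
    · -- x = u₁ : S = {u₂}, T = {v₀}
      rw [hxu₁]
      refine deg_le_aux H₅ H₆ u₁ {u₂} {v₀} ?_ (by simp) ?_
      · intro z hz; rw [Finset.mem_singleton] at hz; subst hz
        rw [SimpleGraph.mem_neighborFinset]; exact haU
      · intro y hy
        rw [SimpleGraph.mem_neighborFinset] at hy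
        rcases hAdj u₁ y hy with ⟨ha, _, _, h3⟩ | h | h
        · rw [Finset.mem_union, Finset.mem_sdiff, SimpleGraph.mem_neighborFinset]
          left
          refine ⟨ha, ?_⟩
          rw [Finset.mem_singleton]
          rintro rfl
          exact h3 rfl
        · rw [Sym2.eq_iff] at h
          rcases h with ⟨h1, h2⟩ | ⟨h1, h2⟩
          · rw [h2]; simp
          · exact absurd h1 nU₁V₀
        · rw [Sym2.eq_iff] at h
          rcases h with ⟨h1, h2⟩ | ⟨h1, h2⟩
          · exact absurd h1 nU
          · exact absurd h1 nU₁V₁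
    by_cases hxu₂ : x = u₂
    · -- x = u₂ : S = {u₁}, T = {v₁}
      rw [hxu₂]
      refine deg_le_aux H₅ H₆ u₂ {u₁} {v₁} ?_ (by simp) ?_
      · intro z hz; rw [Finset.mem_singleton] at hz; subst hz
        rw [SimpleGraph.mem_neighborFinset]; exact haU.symm
      · intro y hy
        rw [SimpleGraph.mem_neighborFinset] at hy
        rcases hAdj u₂ y hy with ⟨ha, _, _, h3⟩ | h | h
        · rw [Finset.mem_union, Finset.mem_sdiff, SimpleGraph.mem_neighborFinset]
          left
          refine ⟨ha, ?_⟩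
          rw [Finset.mem_singleton]
          rintro rfl
          exact h3 Sym2.eq_swap
        · rw [Sym2.eq_iff] at h
          rcases h with ⟨h1, h2⟩ | ⟨h1, h2⟩
          · exact absurd h1 (Ne.symm nU)
          · exact absurd h1 nU₂V₀
        · rw [Sym2.eq_iff] at h
          rcases h with ⟨h1, h2⟩ | ⟨h1, h2⟩
          · rw [h2]; simp
          · exact absurd h1 nU₂V₁
    · -- generic vertex
      refine deg_le_aux H₅ H₆ x ∅ ∅ (by simp) le_rfl ?_
      intro y hy
      rw [SimpleGraph.mem_neighborFinset] at hy
      rcases hAdj x y hy with ⟨ha, _, _, _⟩ | h | h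
      · simp [SimpleGraph.mem_neighborFinset, ha]
      · rw [Sym2.eq_iff] at h
        rcases h with ⟨h1, h2⟩ | ⟨h1, h2⟩
        · exact absurd h1 hxu₁
        · exact absurd h1 hxv₀
      · rw [Sym2.eq_iff] at h
        rcases h with ⟨h1, h2⟩ | ⟨h1, h2⟩
        · exact absurd h1 hxu₂
        · exact absurd h1 hxv₁
  -- conclude
  unfold zagrebM1
  refine Finset.sum_lt_sum (fun i _ => Nat.pow_le_pow_left (hle i) 2) ⟨w, Finset.mem_univ w, ?_⟩
  exact Nat.pow_lt_pow_left hwlt (by norm_num)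
end

section
/- Let H₅ be a connected simple graph on at least 6 vertices containing two cycles C₁ and C₂, where C₂ has length at least 4 and is an endblock attached to the rest of H₅ at the vertex w (that is, every vertex of C₂ other than w has degree 2 in H₅, and w has degree at least 3). Let v₁ and v₂ be the two neighbors of w on C₂, let v₀ be the neighbor of v₂ on C₂ other than w, and let u₁u₂ be an edge of the cycle C₁ with u₁, u₂ not on C₂. Let H₆ = H₅ − {v₁w, v₀v₂, u₁u₂} + {u₁v₀, u₂v₁}. Then M₂(H₆) < M₂(H₅). -/
/-!
No vertex lies on more added than removed edges, so no degree grows from `H₅` to `H₆`, and the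
edges the two graphs share weigh no more in `H₆` than in `H₅`. What remains is to compare the
added edges with the removed ones, weighted by their `H₅`-degree products. With
`d(v₀) = d(v₁) = d(v₂) = 2`, `a = d(u₁)`, `b = d(u₂)` this reads `2a + 2b < 2 d(w) + 4 + ab`,
i.e. `0 < (a - 2)(b - 2) + 2 d(w)`, true because `u₁, u₂` lie on a cycle, so `a, b ≥ 2`.
-/

open scoped Classical

namespace SimpleGraph

open Finset

variable {V : Type*}

section

variable [Fintype V]

noncomputable def edgeWeight (G : SimpleGraph V) : Sym2 V → ℕ :=
  Sym2.lift ⟨fun x y => G.degree x * G.degree y, fun _ _ => Nat.mul_comm _ _⟩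

@[simp]
lemma edgeWeight_mk (G : SimpleGraph V) (x y : V) :
    G.edgeWeight s(x, y) = G.degree x * G.degree y := rfl

lemma zagrebM2_eq_sum_edgeWeight (G : SimpleGraph V) :
    zagrebM2 G = ∑ e ∈ G.edgeFinset, G.edgeWeight e := rfl

lemma edgeWeight_le_of_degree_le {G H : SimpleGraph V} (h : ∀ x, H.degree x ≤ G.degree x)
    (e : Sym2 V) : H.edgeWeight e ≤ G.edgeWeight e := by
  induction e using Sym2.ind with
  | _ x y => exact Nat.mul_le_mul (h x) (h y)

lemma degree_eq_card_filter_mem (G : SimpleGraph V) (x : V) :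
    G.degree x = #{e ∈ G.edgeFinset | x ∈ e} := by
  rw [← card_incidenceFinset_eq_degree, incidenceFinset_eq_filter]

lemma Walk.IsCycle.two_le_degree {G : SimpleGraph V} {u v : V} {p : G.Walk u u}
    (hp : p.IsCycle) (hv : v ∈ p.support) : 2 ≤ G.degree v := by
  rw [← card_neighborSet_eq_degree, ← Nat.card_eq_fintype_card, Nat.card_coe_set_eq,
    ← hp.ncard_neighborSet_toSubgraph_eq_two hv]
  exact Set.ncard_le_ncard (p.toSubgraph.neighborSet_subset v)

def replaceEdges (G : SimpleGraph V) (R A : Finset (Sym2 V)) : SimpleGraph V :=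
  fromEdgeSet (G.edgeSet \ R ∪ A)

lemma edgeFinset_replaceEdges_subset (G : SimpleGraph V) (R A : Finset (Sym2 V)) :
    (G.replaceEdges R A).edgeFinset ⊆ G.edgeFinset \ R ∪ A := by
  rw [← coe_subset, coe_edgeFinset, replaceEdges, edgeSet_fromEdgeSet]
  push_cast
  exact Set.sdiff_subset

section replaceEdges

variable {G : SimpleGraph V} {R A : Finset (Sym2 V)}

lemma degree_replaceEdges_le (hR : R ⊆ G.edgeFinset) {x : V}
    (hx : #{e ∈ A | x ∈ e} ≤ #{e ∈ R | x ∈ e}) :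
    (G.replaceEdges R A).degree x ≤ G.degree x := by
  have hsplit : #{e ∈ G.edgeFinset \ R | x ∈ e} + #{e ∈ R | x ∈ e} = G.degree x := by
    rw [← card_union_of_disjoint (disjoint_filter_filter sdiff_disjoint), ← filter_union,
      sdiff_union_of_subset hR, degree_eq_card_filter_mem]
  calc (G.replaceEdges R A).degree x
      ≤ #{e ∈ G.edgeFinset \ R ∪ A | x ∈ e} := by
        rw [degree_eq_card_filter_mem]
        exact card_le_card (filter_subset_filter _ (edgeFinset_replaceEdges_subset G R A))
    _ ≤ #{e ∈ G.edgeFinset \ R | x ∈ e} + #{e ∈ A | x ∈ e} := by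
        rw [filter_union]
        exact card_union_le _ _
    _ ≤ G.degree x := by omega

lemma zagrebM2_replaceEdges_add_le (hR : R ⊆ G.edgeFinset)
    (hdeg : ∀ x, #{e ∈ A | x ∈ e} ≤ #{e ∈ R | x ∈ e}) :
    zagrebM2 (G.replaceEdges R A) + ∑ e ∈ R, G.edgeWeight e
      ≤ zagrebM2 G + ∑ e ∈ A, G.edgeWeight e := by
  have hsplit := sum_sdiff (f := G.edgeWeight) hR
  have hunion := sum_union_inter (s₁ := G.edgeFinset \ R) (s₂ := A) (f := G.edgeWeight)
  have hle : zagrebM2 (G.replaceEdges R A) ≤ ∑ e ∈ G.edgeFinset \ R ∪ A, G.edgeWeight e :=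
    calc zagrebM2 (G.replaceEdges R A)
        ≤ ∑ e ∈ (G.replaceEdges R A).edgeFinset, G.edgeWeight e :=
          sum_le_sum fun e _ =>
            edgeWeight_le_of_degree_le (fun _ => degree_replaceEdges_le hR (hdeg _)) e
      _ ≤ ∑ e ∈ G.edgeFinset \ R ∪ A, G.edgeWeight e :=
          sum_le_sum_of_subset (edgeFinset_replaceEdges_subset G R A)
  rw [zagrebM2_eq_sum_edgeWeight G]
  omega

lemma zagrebM2_replaceEdges_lt (hR : R ⊆ G.edgeFinset)
    (hdeg : ∀ x, #{e ∈ A | x ∈ e} ≤ #{e ∈ R | x ∈ e})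
    (hweight : ∑ e ∈ A, G.edgeWeight e < ∑ e ∈ R, G.edgeWeight e) :
    zagrebM2 (G.replaceEdges R A) < zagrebM2 G := by
  have := zagrebM2_replaceEdges_add_le hR hdeg
  omega

end replaceEdges

end

lemma card_filter_mem_switch_le {w v₁ v₂ v₀ u₁ u₂ : V} (hu : u₁ ≠ u₂) (hu₁v₁ : u₁ ≠ v₁)
    (hu₂v₀ : u₂ ≠ v₀) (hv₂w : v₂ ≠ w) (x : V) :
    #{e ∈ ({s(u₁, v₀), s(u₂, v₁)} : Finset (Sym2 V)) | x ∈ e}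
      ≤ #{e ∈ ({s(v₁, w), s(v₀, v₂), s(u₁, u₂)} : Finset (Sym2 V)) | x ∈ e} := by
  simp only [filter_insert, filter_singleton, Sym2.mem_iff]
  split_ifs <;> grind

lemma sum_edgeWeight_switch_lt [Fintype V] {G : SimpleGraph V} {w v₁ v₂ v₀ u₁ u₂ : V} (hu : u₁ ≠ u₂)
    (hu₁v₁ : u₁ ≠ v₁) (hu₂v₀ : u₂ ≠ v₀) (hv₂w : v₂ ≠ w) (hv₀w : v₀ ≠ w) (hu₁w : u₁ ≠ w)
    (hu₁v₀ : u₁ ≠ v₀) (hv₁ : G.degree v₁ = 2) (hv₂ : G.degree v₂ = 2) (hv₀ : G.degree v₀ = 2)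
    (hw : 0 < G.degree w) (hu₁ : 2 ≤ G.degree u₁) (hu₂ : 2 ≤ G.degree u₂) :
    ∑ e ∈ {s(u₁, v₀), s(u₂, v₁)}, G.edgeWeight e
      < ∑ e ∈ {s(v₁, w), s(v₀, v₂), s(u₁, u₂)}, G.edgeWeight e := by
  rw [sum_pair, sum_insert, sum_pair]
  · simp only [edgeWeight_mk, hv₁, hv₂, hv₀]
    nlinarith
  all_goals
    simp only [ne_eq, mem_insert, mem_singleton, Sym2.eq_iff]
    grind

end SimpleGraph

theorem M2_operationIII_lt_general {V : Type*} [Fintype V] (H₅ : SimpleGraph V)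
    (w v₁ v₂ v₀ u₁ u₂ : V)
    (c₂ : H₅.Walk w w)
    (hend : ∀ x ∈ c₂.support, x ≠ w → H₅.degree x = 2)
    (hv₁ : s(w, v₁) ∈ c₂.edges) (hv₂ : s(w, v₂) ∈ c₂.edges)
    (hv₀ : s(v₂, v₀) ∈ c₂.edges) (hv₀w : v₀ ≠ w)
    (hcyc : ∃ (c₀ : V) (c₁ : H₅.Walk c₀ c₀), c₁.IsCycle ∧ s(u₁, u₂) ∈ c₁.edges)
    (hu₁ : u₁ ∉ c₂.support) (hu₂ : u₂ ∉ c₂.support)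
    (H₆ : SimpleGraph V)
    (hH₆ : H₆ = SimpleGraph.fromEdgeSet
      ((H₅.edgeSet \ {s(v₁, w), s(v₀, v₂), s(u₁, u₂)}) ∪ {s(u₁, v₀), s(u₂, v₁)})) :
    zagrebM2 H₆ < zagrebM2 H₅ := by
  obtain ⟨c₀, c₁, hc₁, hu⟩ := hcyc
  have hwv₁ := c₂.adj_of_mem_edges hv₁
  have hwv₂ := c₂.adj_of_mem_edges hv₂
  have hv₂v₀ := c₂.adj_of_mem_edges hv₀
  have hu₁u₂ := c₁.adj_of_mem_edges hu
  have hv₁s := c₂.snd_mem_support_of_mem_edges hv₁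
  have hv₂s := c₂.snd_mem_support_of_mem_edges hv₂
  have hv₀s := c₂.snd_mem_support_of_mem_edges hv₀
  have hu₁v₁ := (ne_of_mem_of_not_mem hv₁s hu₁).symm
  have hu₂v₀ := (ne_of_mem_of_not_mem hv₀s hu₂).symm
  have hH₆ : H₆ = H₅.replaceEdges {s(v₁, w), s(v₀, v₂), s(u₁, u₂)} {s(u₁, v₀), s(u₂, v₁)} := by
    simp [hH₆, SimpleGraph.replaceEdges]
  subst hH₆
  refine SimpleGraph.zagrebM2_replaceEdges_lt ?_
    (SimpleGraph.card_filter_mem_switch_le hu₁u₂.ne hu₁v₁ hu₂v₀ hwv₂.ne') ?_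
  · simp [Finset.insert_subset_iff, hwv₁.symm, hv₂v₀.symm, hu₁u₂]
  · exact SimpleGraph.sum_edgeWeight_switch_lt hu₁u₂.ne hu₁v₁ hu₂v₀ hwv₂.ne' hv₀w
      (ne_of_mem_of_not_mem c₂.start_mem_support hu₁).symm
      (ne_of_mem_of_not_mem hv₀s hu₁).symm
      (hend v₁ hv₁s hwv₁.ne') (hend v₂ hv₂s hwv₂.ne') (hend v₀ hv₀s hv₀w)
      ((H₅.degree_pos_iff_exists_adj w).mpr ⟨v₁, hwv₁⟩)
      (hc₁.two_le_degree (c₁.fst_mem_support_of_mem_edges hu))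
      (hc₁.two_le_degree (c₁.snd_mem_support_of_mem_edges hu))

/-- Operation III: `H₅` is connected on at least 6 vertices, `c₂` is a cycle of
length at least 4 which is an endblock attached at `w` (every vertex of `c₂`
other than `w` has degree 2 in `H₅`, and `w` has degree at least 3), `v₁, v₂`
are the two neighbors of `w` on `c₂`, `v₀` is the neighbor of `v₂` on `c₂` other
than `w`, and `u₁u₂` is an edge of a cycle `c₁` with `u₁, u₂` not on `c₂`. Then
`H₆ = H₅ - {v₁w, v₀v₂, u₁u₂} + {u₁v₀, u₂v₁}` satisfies `M₂(H₆) < M₂(H₅)`. -/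
theorem M2_operationIII_lt {V : Type*} [Fintype V] (H₅ : SimpleGraph V)
    (hconn : H₅.Connected) (hcard : 6 ≤ Fintype.card V)
    (w v₁ v₂ v₀ u₁ u₂ : V)
    (c₂ : H₅.Walk w w) (hc₂ : c₂.IsCycle) (hc₂len : 4 ≤ c₂.length)
    (hend : ∀ x ∈ c₂.support, x ≠ w → H₅.degree x = 2)
    (hw : 3 ≤ H₅.degree w)
    (hv₁ : s(w, v₁) ∈ c₂.edges) (hv₂ : s(w, v₂) ∈ c₂.edges) (hv₁₂ : v₁ ≠ v₂)
    (hv₀ : s(v₂, v₀) ∈ c₂.edges) (hv₀w : v₀ ≠ w)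
    (hcyc : ∃ (c₀ : V) (c₁ : H₅.Walk c₀ c₀), c₁.IsCycle ∧ s(u₁, u₂) ∈ c₁.edges)
    (hu₁ : u₁ ∉ c₂.support) (hu₂ : u₂ ∉ c₂.support)
    (H₆ : SimpleGraph V)
    (hH₆ : H₆ = SimpleGraph.fromEdgeSet
      ((H₅.edgeSet \ {s(v₁, w), s(v₀, v₂), s(u₁, u₂)}) ∪ {s(u₁, v₀), s(u₂, v₁)})) :
    zagrebM2 H₆ < zagrebM2 H₅ :=
  M2_operationIII_lt_general H₅ w v₁ v₂ v₀ u₁ u₂ c₂ hend hv₁ hv₂ hv₀ hv₀w hcyc hu₁ hu₂ H₆ hH₆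
end

section
/- Let H₇ be a connected simple graph containing two cycles C₁ and C₂ whose only common vertex is v, where d(v) ≥ 4 and C₂ is an endblock (every vertex of C₂ other than v has degree 2 in H₇). Let v₂ be a neighbor of v on C₁, let v₁ be a neighbor of v on C₂, and let v₀ be the neighbor of v₁ on C₂ other than v. Let H₈ = H₇ − {vv₂, v₀v₁} + {v₀v₂}. Then M₂(H₈) < M₂(H₇). -/
/-!
Deleting `vv₂` and `v₀v₁` and adding `v₀v₂` raises no degree: `v₀` and `v₂` each lose one
neighbour and gain one. Hence `M₂(H₈)` is at most the sum of the `H₇`-degree products over the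
edges of `H₈`, which is `M₂(H₇) - d(v)d(v₂) - d(v₀)d(v₁) + d(v₀)d(v₂)`, and with
`d(v₀) = d(v₁) = 2` the added term `2d(v₂)` is smaller than `d(v)d(v₂) + 4`. The edge `v₀v₂` is
genuinely new because `v₀` has degree 2 on the cycle `C₂`, so all its neighbours lie on `C₂`,
while `v₂` does not.
-/

open scoped Classical

namespace SimpleGraph

variable {V : Type*} {G : SimpleGraph V}

lemma Walk.IsCycle.mem_support_of_adj_of_degree_eq_two {u x y : V} {p : G.Walk u u}
    [Fintype (G.neighborSet x)] (hp : p.IsCycle) (hx : x ∈ p.support) (hdeg : G.degree x = 2)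
    (hxy : G.Adj x y) : y ∈ p.support := by
  -- the cycle already supplies two neighbours of `x`
  have hcycle : p.toSubgraph.neighborSet x = G.neighborSet x :=
    Set.eq_of_subset_of_ncard_le (fun _ h => h.adj_sub) (by
      rw [hp.ncard_neighborSet_toSubgraph_eq_two hx, Set.ncard_eq_toFinset_card',
        ← neighborFinset_def, card_neighborFinset_eq_degree, hdeg])
  have hxy' : y ∈ p.toSubgraph.neighborSet x := by rw [hcycle]; exact hxy
  exact p.mem_support_of_adj_toSubgraph hxy'.symm

lemma degree_le_of_neighborFinset_subset_insert_erase {H : SimpleGraph V} {x y z : V}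
    [Fintype (G.neighborSet x)] [Fintype (H.neighborSet x)] (hz : G.Adj x z)
    (h : H.neighborFinset x ⊆ insert y ((G.neighborFinset x).erase z)) :
    H.degree x ≤ G.degree x := by
  rw [← card_neighborFinset_eq_degree, ← card_neighborFinset_eq_degree]
  calc (H.neighborFinset x).card
      ≤ ((G.neighborFinset x).erase z).card + 1 :=
        (Finset.card_le_card h).trans (Finset.card_insert_le _ _)
    _ = (G.neighborFinset x).card :=
        Finset.card_erase_add_one ((G.mem_neighborFinset x z).mpr hz)

def rewire (G : SimpleGraph V) (a b c d : V) : SimpleGraph V :=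
  fromEdgeSet ((G.edgeSet \ {s(a, b), s(c, d)}) ∪ {s(c, b)})

variable {a b c d : V}

lemma rewire_adj {x y : V} : (G.rewire a b c d).Adj x y ↔
    (G.Adj x y ∧ s(x, y) ≠ s(a, b) ∧ s(x, y) ≠ s(c, d)) ∨ (s(x, y) = s(c, b) ∧ x ≠ y) := by
  simp only [rewire, fromEdgeSet_adj, Set.mem_union, Set.mem_sdiff, mem_edgeSet,
    Set.mem_insert_iff, Set.mem_singleton_iff, not_or]
  constructor
  · rintro ⟨h | h, hne⟩
    · exact Or.inl h
    · exact Or.inr ⟨h, hne⟩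
  · rintro (h | h)
    · exact ⟨Or.inl h, h.1.ne⟩
    · exact ⟨Or.inr h.1, h.2⟩

variable [Fintype V]

lemma rewire_degree_le (hab : G.Adj a b) (hcd : G.Adj c d) (x : V) :
    (G.rewire a b c d).degree x ≤ G.degree x := by
  by_cases hxc : x = c
  · subst hxc
    refine degree_le_of_neighborFinset_subset_insert_erase (y := b) hcd fun y hy => ?_
    rcases rewire_adj.mp ((mem_neighborFinset _ _ _).mp hy) with ⟨hxy, -, hyd⟩ | ⟨hyb, -⟩
    · exact Finset.mem_insert_of_mem <| Finset.mem_erase.mpr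
        ⟨by rintro rfl; exact hyd rfl, (mem_neighborFinset _ _ _).mpr hxy⟩
    · rw [Sym2.congr_right.mp hyb]
      exact Finset.mem_insert_self _ _
  by_cases hxb : x = b
  · subst hxb
    refine degree_le_of_neighborFinset_subset_insert_erase (y := c) hab.symm fun y hy => ?_
    rcases rewire_adj.mp ((mem_neighborFinset _ _ _).mp hy) with ⟨hxy, hya, -⟩ | ⟨hyc, -⟩
    · exact Finset.mem_insert_of_mem <| Finset.mem_erase.mpr
        ⟨by rintro rfl; exact hya Sym2.eq_swap, (mem_neighborFinset _ _ _).mpr hxy⟩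
    · rw [Sym2.eq_swap, Sym2.congr_left] at hyc
      rw [hyc]
      exact Finset.mem_insert_self _ _
  rw [← card_neighborFinset_eq_degree, ← card_neighborFinset_eq_degree]
  refine Finset.card_le_card fun y hy => ?_
  rcases rewire_adj.mp ((mem_neighborFinset _ _ _).mp hy) with ⟨hxy, -⟩ | ⟨hxy, -⟩
  · exact (mem_neighborFinset _ _ _).mpr hxy
  · rcases Sym2.eq_iff.mp hxy with ⟨rfl, -⟩ | ⟨rfl, -⟩
    · exact absurd rfl hxc
    · exact absurd rfl hxb

lemma edgeFinset_rewire (hcb : c ≠ b) :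
    (G.rewire a b c d).edgeFinset =
      insert s(c, b) ((G.edgeFinset.erase s(a, b)).erase s(c, d)) := by
  ext e
  induction e using Sym2.ind with
  | _ x y =>
    rw [mem_edgeFinset, mem_edgeSet, rewire_adj]
    simp only [Finset.mem_insert, Finset.mem_erase, mem_edgeFinset, mem_edgeSet]
    constructor
    · rintro (⟨hxy, hab, hcd⟩ | ⟨hxy, -⟩)
      · exact Or.inr ⟨hcd, hab, hxy⟩
      · exact Or.inl hxy
    · rintro (hxy | ⟨hcd, hab, hxy⟩)
      · refine Or.inr ⟨hxy, ?_⟩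
        rintro rfl
        rcases Sym2.eq_iff.mp hxy with ⟨rfl, rfl⟩ | ⟨rfl, rfl⟩ <;> exact hcb rfl
      · exact Or.inl ⟨hxy, hab, hcd⟩

lemma sum_edgeFinset_rewire_add {M : Type*} [AddCommMonoid M] (f : Sym2 V → M)
    (hab : G.Adj a b) (hcd : G.Adj c d) (hne : s(a, b) ≠ s(c, d)) (hcb_nadj : ¬G.Adj c b)
    (hcb : c ≠ b) :
    ∑ e ∈ (G.rewire a b c d).edgeFinset, f e + (f s(a, b) + f s(c, d)) =
      ∑ e ∈ G.edgeFinset, f e + f s(c, b) := by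
  have hab_mem : s(a, b) ∈ G.edgeFinset := mem_edgeFinset.mpr hab
  have hcd_mem : s(c, d) ∈ G.edgeFinset.erase s(a, b) :=
    Finset.mem_erase.mpr ⟨hne.symm, mem_edgeFinset.mpr hcd⟩
  have hcb_nmem : s(c, b) ∉ (G.edgeFinset.erase s(a, b)).erase s(c, d) :=
    fun h => hcb_nadj (mem_edgeFinset.mp (Finset.mem_of_mem_erase (Finset.mem_of_mem_erase h)))
  rw [edgeFinset_rewire hcb, Finset.sum_insert hcb_nmem,
    ← Finset.sum_erase_add G.edgeFinset f hab_mem,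
    ← Finset.sum_erase_add _ f hcd_mem]
  abel

noncomputable def degProd (G : SimpleGraph V) : Sym2 V → ℕ :=
  Sym2.lift ⟨fun x y => G.degree x * G.degree y, fun _ _ => Nat.mul_comm _ _⟩

@[simp]
lemma degProd_mk (x y : V) : G.degProd s(x, y) = G.degree x * G.degree y := rfl

lemma zagrebM2_eq_sum_degProd : zagrebM2 G = ∑ e ∈ G.edgeFinset, G.degProd e := rfl

lemma degProd_le_of_degree_le {H : SimpleGraph V} (h : ∀ x, H.degree x ≤ G.degree x)
    (e : Sym2 V) : H.degProd e ≤ G.degProd e := by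
  induction e using Sym2.ind with
  | _ x y => exact Nat.mul_le_mul (h x) (h y)

lemma zagrebM2_rewire_lt (hab : G.Adj a b) (hcd : G.Adj c d) (hne : s(a, b) ≠ s(c, d))
    (hcb_nadj : ¬G.Adj c b) (hcb : c ≠ b)
    (hdeg : G.degree c * G.degree b < G.degree a * G.degree b + G.degree c * G.degree d) :
    zagrebM2 (G.rewire a b c d) < zagrebM2 G := by
  have hsum := sum_edgeFinset_rewire_add G.degProd hab hcd hne hcb_nadj hcb
  simp only [degProd_mk] at hsum
  calc zagrebM2 (G.rewire a b c d) ≤ ∑ e ∈ (G.rewire a b c d).edgeFinset, G.degProd e :=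
        Finset.sum_le_sum fun e _ => degProd_le_of_degree_le (rewire_degree_le hab hcd) e
    _ < zagrebM2 G := by rw [zagrebM2_eq_sum_degProd]; omega

end SimpleGraph

theorem M2_operationIV_lt_general {V : Type*} [Fintype V] (H₇ : SimpleGraph V)
    (v v₀ v₁ v₂ : V)
    (c₁ : H₇.Walk v v) (c₂ : H₇.Walk v v)
    (hc₂ : c₂.IsCycle)
    (hmeet : ∀ x, x ∈ c₁.support → x ∈ c₂.support → x = v)
    (hdeg : 4 ≤ H₇.degree v)
    (hend : ∀ x ∈ c₂.support, x ≠ v → H₇.degree x = 2)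
    (hv₂ : s(v, v₂) ∈ c₁.edges)
    (hv₁ : s(v, v₁) ∈ c₂.edges)
    (hv₀ : s(v₁, v₀) ∈ c₂.edges) (hv₀v : v₀ ≠ v)
    (H₈ : SimpleGraph V)
    (hH₈ : H₈ = SimpleGraph.fromEdgeSet
      ((H₇.edgeSet \ {s(v, v₂), s(v₀, v₁)}) ∪ {s(v₀, v₂)})) :
    zagrebM2 H₈ < zagrebM2 H₇ := by
  have hvv₂ : H₇.Adj v v₂ := c₁.adj_of_mem_edges hv₂
  have hvv₁ : H₇.Adj v v₁ := c₂.adj_of_mem_edges hv₁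
  have hv₀v₁ : H₇.Adj v₀ v₁ := (c₂.adj_of_mem_edges hv₀).symm
  have hv₀_mem : v₀ ∈ c₂.support := c₂.snd_mem_support_of_mem_edges hv₀
  have hv₂_nmem : v₂ ∉ c₂.support := fun h =>
    hvv₂.ne (hmeet v₂ (c₁.snd_mem_support_of_mem_edges hv₂) h).symm
  have hdeg₀ : H₇.degree v₀ = 2 := hend v₀ hv₀_mem hv₀v
  have hdeg₁ : H₇.degree v₁ = 2 := hend v₁ (c₂.snd_mem_support_of_mem_edges hv₁) hvv₁.ne'
  have hne : s(v, v₂) ≠ s(v₀, v₁) := fun h => by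
    rcases Sym2.eq_iff.mp h with ⟨h', -⟩ | ⟨h', -⟩
    exacts [hv₀v h'.symm, hvv₁.ne h']
  subst hH₈
  refine SimpleGraph.zagrebM2_rewire_lt hvv₂ hv₀v₁ hne
    (fun h => hv₂_nmem (hc₂.mem_support_of_adj_of_degree_eq_two hv₀_mem hdeg₀ h))
    (fun h => hv₂_nmem (h ▸ hv₀_mem)) ?_
  rw [hdeg₀, hdeg₁]
  nlinarith

/-- Operation IV: `H₇` is connected and contains two cycles `c₁` and `c₂` whose
only common vertex is `v`, with `d(v) ≥ 4` and `c₂` an endblock (every vertex of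
`c₂` other than `v` has degree 2 in `H₇`). If `v₂` is a neighbor of `v` on `c₁`,
`v₁` is a neighbor of `v` on `c₂`, and `v₀` is the neighbor of `v₁` on `c₂` other
than `v`, then `H₈ = H₇ - {vv₂, v₀v₁} + {v₀v₂}` satisfies `M₂(H₈) < M₂(H₇)`. -/
theorem M2_operationIV_lt {V : Type*} [Fintype V] (H₇ : SimpleGraph V)
    (hconn : H₇.Connected) (v v₀ v₁ v₂ : V)
    (c₁ : H₇.Walk v v) (c₂ : H₇.Walk v v)
    (hc₁ : c₁.IsCycle) (hc₂ : c₂.IsCycle)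
    (hmeet : ∀ x, x ∈ c₁.support → x ∈ c₂.support → x = v)
    (hdeg : 4 ≤ H₇.degree v)
    (hend : ∀ x ∈ c₂.support, x ≠ v → H₇.degree x = 2)
    (hv₂ : s(v, v₂) ∈ c₁.edges)
    (hv₁ : s(v, v₁) ∈ c₂.edges)
    (hv₀ : s(v₁, v₀) ∈ c₂.edges) (hv₀v : v₀ ≠ v)
    (H₈ : SimpleGraph V)
    (hH₈ : H₈ = SimpleGraph.fromEdgeSet
      ((H₇.edgeSet \ {s(v, v₂), s(v₀, v₁)}) ∪ {s(v₀, v₂)})) :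
    zagrebM2 H₈ < zagrebM2 H₇ :=
  M2_operationIV_lt_general H₇ v v₀ v₁ v₂ c₁ c₂ hc₂ hmeet hdeg hend hv₂ hv₁ hv₀ hv₀v H₈ hH₈
end

section
/- Let H be a connected simple graph with |E(H)| ≥ |V(H)|, and let u and v be two distinct vertices of H lying on a common cycle of H. For integers a, b ≥ 2, let H(a,b) denote the graph obtained from H by attaching a pendant path with a − 1 new vertices at u and a pendant path with b − 1 new vertices at v, so that d_{H(a,b)}(u) ≥ 3 and d_{H(a,b)}(v) ≥ 3. Then M₁(H(a,b)) ≥ M₁(H(1, a+b−1)), where H(1, a+b−1) is the graph obtained from H by attaching a single pendant path with a + b − 2 new vertices at v. -/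
open scoped Classical

/-- The graph obtained from `G` by attaching a pendant path with `t` new vertices
at the vertex `x`: we add new vertices `0, 1, …, t-1` and the edges
`x–0, 0–1, …, (t-2)–(t-1)`. -/
def attachPath {V : Type*} (G : SimpleGraph V) (x : V) (t : ℕ) :
    SimpleGraph (V ⊕ Fin t) :=
  SimpleGraph.fromEdgeSet
    ((Sym2.map Sum.inl '' G.edgeSet)
      ∪ {e | ∃ h : 0 < t, e = s(Sum.inl x, Sum.inr ⟨0, h⟩)}
      ∪ {e | ∃ (i : ℕ) (h : i + 1 < t),
          e = s(Sum.inr ⟨i, Nat.lt_of_succ_lt h⟩, Sum.inr ⟨i + 1, h⟩)})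

lemma attachPath_adj {V : Type*} (G : SimpleGraph V) (x : V) (t : ℕ) (p q : V ⊕ Fin t) :
    (attachPath G x t).Adj p q ↔
      (∃ a b, G.Adj a b ∧ p = Sum.inl a ∧ q = Sum.inl b) ∨
      (∃ h : 0 < t, (p = Sum.inl x ∧ q = Sum.inr ⟨0, h⟩) ∨
        (q = Sum.inl x ∧ p = Sum.inr ⟨0, h⟩)) ∨
      (∃ (i : ℕ) (h : i + 1 < t),
        (p = Sum.inr ⟨i, Nat.lt_of_succ_lt h⟩ ∧ q = Sum.inr ⟨i + 1, h⟩) ∨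
        (q = Sum.inr ⟨i, Nat.lt_of_succ_lt h⟩ ∧ p = Sum.inr ⟨i + 1, h⟩)) := by
  simp only [attachPath, SimpleGraph.fromEdgeSet_adj, Set.mem_union, Set.mem_image,
    Set.mem_setOf_eq, SimpleGraph.mem_edgeSet]
  constructor
  · rintro ⟨(⟨⟨e, he, hmap⟩ | ⟨h, he⟩⟩ | ⟨i, h, he⟩), hne⟩
    · induction e with
      | h a b =>
        simp only [Sym2.map_pair_eq, Sym2.eq_iff] at hmap
        rcases hmap with ⟨h1, h2⟩ | ⟨h1, h2⟩
        · exact Or.inl ⟨a, b, he, h1.symm, h2.symm⟩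
        · exact Or.inl ⟨b, a, he.symm, h2.symm, h1.symm⟩
    · rw [Sym2.eq_iff] at he
      exact Or.inr (Or.inl ⟨h, by tauto⟩)
    · rw [Sym2.eq_iff] at he
      exact Or.inr (Or.inr ⟨i, h, by tauto⟩)
  · rintro (⟨a, b, hab, rfl, rfl⟩ | ⟨h, (⟨rfl, rfl⟩ | ⟨rfl, rfl⟩)⟩ | ⟨i, h, (⟨rfl, rfl⟩ | ⟨rfl, rfl⟩)⟩)
    · exact ⟨Or.inl (Or.inl ⟨s(a,b), hab, rfl⟩), by simp [hab.ne]⟩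
    · exact ⟨Or.inl (Or.inr ⟨h, rfl⟩), by simp⟩
    · exact ⟨Or.inl (Or.inr ⟨h, Sym2.eq_swap⟩), by simp⟩
    · exact ⟨Or.inr ⟨i, h, rfl⟩, by simp⟩
    · exact ⟨Or.inr ⟨i, h, Sym2.eq_swap⟩, by simp⟩

lemma degree_inl {V : Type*} [Fintype V] (G : SimpleGraph V) (x : V) (t : ℕ) (y : V) :
    (attachPath G x t).degree (Sum.inl y) =
      G.degree y + (if 0 < t ∧ y = x then 1 else 0) := by
  classical
  have hset : (attachPath G x t).neighborFinset (Sum.inl y) =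
      (G.neighborFinset y).image Sum.inl ∪
        (if h : 0 < t ∧ y = x then {Sum.inr ⟨0, h.1⟩} else ∅) := by
    ext p
    simp only [SimpleGraph.mem_neighborFinset, attachPath_adj, Finset.mem_union,
      Finset.mem_image, SimpleGraph.mem_neighborFinset]
    constructor
    · rintro (⟨a, b, hab, hy, rfl⟩ | ⟨h, (⟨hy, rfl⟩ | ⟨hy, h0⟩)⟩ | ⟨i, h, (⟨hy, rfl⟩ | ⟨hy, h0⟩)⟩)
      · exact Or.inl ⟨b, by cases hy; exact hab, rfl⟩
      · cases hy; right; rw [dif_pos ⟨h, rfl⟩]; simp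
      · exact absurd h0 (by simp)
      · exact absurd hy (by simp)
      · exact absurd h0 (by simp)
    · rintro (⟨b, hb, rfl⟩ | hp)
      · exact Or.inl ⟨y, b, hb, rfl, rfl⟩
      · split_ifs at hp with h
        · simp only [Finset.mem_singleton] at hp
          subst hp
          exact Or.inr (Or.inl ⟨h.1, Or.inl ⟨by rw [h.2], rfl⟩⟩)
        · simp at hp
  rw [SimpleGraph.degree, hset, Finset.card_union_of_disjoint, Finset.card_image_of_injective _ Sum.inl_injective]
  · congr 1
    split_ifs with h
    · simp
    · simp
  · split_ifs with h
    · simp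
    · simp

lemma degree_inr {V : Type*} [Fintype V] (G : SimpleGraph V) (x : V) (t : ℕ) (i : Fin t) :
    (attachPath G x t).degree (Sum.inr i) = if (i : ℕ) + 1 < t then 2 else 1 := by
  classical
  have hset : (attachPath G x t).neighborFinset (Sum.inr i) =
      (if h : (i : ℕ) = 0 then {Sum.inl x}
        else {Sum.inr (⟨(i : ℕ) - 1, lt_trans (by omega) i.2⟩ : Fin t)}) ∪
      (if h : (i : ℕ) + 1 < t then {Sum.inr (⟨(i : ℕ) + 1, h⟩ : Fin t)} else ∅) := by
    ext p
    simp only [SimpleGraph.mem_neighborFinset, attachPath_adj, Finset.mem_union]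
    constructor
    · rintro (⟨a, b, hab, h0, rfl⟩ | ⟨h, (⟨h0, h1⟩ | ⟨h0, h1⟩)⟩ | ⟨k, hk, (⟨h1, h2⟩ | ⟨h1, h2⟩)⟩)
      · exact absurd h0 (by simp)
      · exact absurd h0 (by simp)
      · -- p = inl x, i = ⟨0,h⟩
        have e1 : (i : ℕ) = 0 := congrArg Fin.val (Sum.inr.inj h1)
        left; rw [dif_pos e1]; simp [h0]
      · -- i = ⟨k,_⟩, p = inr ⟨k+1,hk⟩
        have e1 : (i : ℕ) = k := congrArg Fin.val (Sum.inr.inj h1)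
        right; rw [dif_pos (by omega)]
        rw [h2]; simp only [Finset.mem_singleton, Sum.inr.injEq, Fin.mk.injEq]; omega
      · -- p = inr ⟨k,_⟩, i = ⟨k+1,hk⟩
        have e1 : (i : ℕ) = k + 1 := congrArg Fin.val (Sum.inr.inj h2)
        left; rw [dif_neg (by omega)]
        rw [h1]; simp only [Finset.mem_singleton, Sum.inr.injEq, Fin.mk.injEq]; omega
    · rintro (h | h)
      · split_ifs at h with hc
        · simp only [Finset.mem_singleton] at h
          subst h
          exact Or.inr (Or.inl ⟨i.pos, Or.inr ⟨rfl, by congr 1; exact Fin.ext hc⟩⟩)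
        · simp only [Finset.mem_singleton] at h
          subst h
          refine Or.inr (Or.inr ⟨(i : ℕ) - 1, by omega, Or.inr ⟨rfl, ?_⟩⟩)
          congr 1; exact Fin.ext (by simp; omega)
      · split_ifs at h with hc
        · simp only [Finset.mem_singleton] at h
          subst h
          exact Or.inr (Or.inr ⟨(i : ℕ), hc, Or.inl ⟨by congr 1, rfl⟩⟩)
        · simp at h
  rw [SimpleGraph.degree, hset, Finset.card_union_of_disjoint]
  · split_ifs with h1 h2 h3 <;> simp
  · split_ifs with h1 h2 h3 <;>
      simp only [Finset.disjoint_singleton_left, Finset.disjoint_empty_right,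
        Finset.mem_singleton] <;>
      try simp


lemma zagreb_attach {V : Type*} [Fintype V] (G : SimpleGraph V) (x : V) (t : ℕ)
    (ht : 1 ≤ t) :
    zagrebM1 (attachPath G x t) + 2 = zagrebM1 G + 2 * G.degree x + 4 * t := by
  classical
  unfold zagrebM1
  rw [Fintype.sum_sum_type]
  have h1 : ∑ y : V, (attachPath G x t).degree (Sum.inl y) ^ 2 =
      (∑ y : V, G.degree y ^ 2) + (2 * G.degree x + 1) := by
    have key : ∀ y : V, (attachPath G x t).degree (Sum.inl y) ^ 2 =
        G.degree y ^ 2 + (if y = x then 2 * G.degree x + 1 else 0) := by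
      intro y
      rw [degree_inl]
      split_ifs with h1 h2 h2
      · rw [h1.2]; ring
      · exact absurd h1.2 h2
      · exact absurd ⟨by omega, h2⟩ h1
      · ring
    rw [Finset.sum_congr rfl (fun y _ => key y), Finset.sum_add_distrib,
      Finset.sum_ite_eq' Finset.univ x, if_pos (Finset.mem_univ x)]
  have h2 : (∑ i : Fin t, (attachPath G x t).degree (Sum.inr i) ^ 2) + 3 = 4 * t := by
    have key : ∀ i : Fin t, (attachPath G x t).degree (Sum.inr i) ^ 2 =
        if (i : ℕ) + 1 < t then 4 else 1 := by
      intro i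
      rw [degree_inr]
      split_ifs <;> norm_num
    rw [Finset.sum_congr rfl (fun i _ => key i),
      Fin.sum_univ_eq_sum_range (fun i => if i + 1 < t then 4 else 1),
      Finset.sum_ite, Finset.sum_const, Finset.sum_const]
    have e1 : Finset.filter (fun i => i + 1 < t) (Finset.range t) = Finset.range (t - 1) := by
      ext i; simp only [Finset.mem_filter, Finset.mem_range]; omega
    have e2 : Finset.filter (fun i => ¬ i + 1 < t) (Finset.range t) = {t - 1} := by
      ext i; simp only [Finset.mem_filter, Finset.mem_range, Finset.mem_singleton]; omega
    rw [e1, e2]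
    simp only [Finset.card_range, Finset.card_singleton, smul_eq_mul]
    omega
  omega

/-- Let `H` be connected with `|E(H)| ≥ |V(H)|` and let `u ≠ v` lie on a common
cycle of `H`. For `a, b ≥ 2`, the graph `H(a,b)` (attach a pendant path with
`a - 1` new vertices at `u` and one with `b - 1` new vertices at `v`) satisfies
`M₁(H(a,b)) ≥ M₁(H(1, a+b-1))`, where `H(1, a+b-1)` attaches a single pendant
path with `a + b - 2` new vertices at `v`. -/
theorem M1_attachPath_ge {V : Type*} [Fintype V] (H : SimpleGraph V)
    (hconn : H.Connected) (hE : Fintype.card V ≤ H.edgeSet.ncard)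
    (u v : V) (huv : u ≠ v)
    (hcyc : ∃ (x : V) (c : H.Walk x x), c.IsCycle ∧ u ∈ c.support ∧ v ∈ c.support)
    (a b : ℕ) (ha : 2 ≤ a) (hb : 2 ≤ b) :
    zagrebM1 (attachPath (attachPath H u (a - 1)) (Sum.inl v) (b - 1)) ≥
      zagrebM1 (attachPath H v (a + b - 2)) := by
  classical
  obtain ⟨w⟩ := hconn.preconnected u v
  have hdu : 1 ≤ H.degree u := by
    cases w with
    | nil => exact absurd rfl huv
    | cons h p => exact (H.degree_pos_iff_exists_adj u).2 ⟨_, h⟩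
  have e1 := zagreb_attach (attachPath H u (a - 1)) (Sum.inl v) (b - 1) (by omega)
  have e2 := zagreb_attach H u (a - 1) (by omega)
  have e3 := zagreb_attach H v (a + b - 2) (by omega)
  have edeg : (attachPath H u (a - 1)).degree (Sum.inl v) = H.degree v := by
    rw [degree_inl, if_neg (fun h => huv h.2.symm), Nat.add_zero]
  rw [edeg] at e1
  omega
end

section
/- Let n and k be integers with k ≥ 1 and n − k ≥ 3, and let G ∈ 𝕍_{n,k}. Then M₁(G) ≥ 4n + 2, with equality if and only if G is isomorphic to C_{n,k}. -/
open scoped Classical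

/-- `v` is a cut vertex of `G`: deleting `v` disconnects the graph. -/
def IsCutVertex {V : Type*} (G : SimpleGraph V) (v : V) : Prop :=
  ¬ (SimpleGraph.induce {u : V | u ≠ v} G).Connected

/-- `G` belongs to `𝕍_{n,k}` (with `n` the cardinality of the vertex type):
`G` is connected, has exactly `k` cut vertices, and contains at least one
cycle. -/
def MemVnk {V : Type*} (G : SimpleGraph V) (k : ℕ) : Prop :=
  G.Connected ∧ {v : V | IsCutVertex G v}.ncard = k ∧
    ∃ (x : V) (c : G.Walk x x), c.IsCycle

/-- The graph `C_{n,k}` on `n` vertices: the cycle on the `n - k` vertices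
`k, k+1, …, n-1` together with a pendant path `0 – 1 – ⋯ – k` (with `k` edges
and `k` vertices off the cycle) attached at the cycle vertex `k`. Its edges are
those of the Hamiltonian path `0 – 1 – ⋯ – (n-1)` together with the edge
joining `k` and `n-1`. -/
def cnk (n k : ℕ) : SimpleGraph (Fin n) :=
  SimpleGraph.fromEdgeSet
    ({e | ∃ i j : Fin n, (j : ℕ) = (i : ℕ) + 1 ∧ e = s(i, j)}
      ∪ {e | ∃ i j : Fin n, (i : ℕ) = k ∧ (j : ℕ) = n - 1 ∧ e = s(i, j)})


/-!
Since `∑ d(v) = 2m`, we have `M₁(G) = ∑ (d(v) - 1)(d(v) - 2) + 6m - 2n`, and every summand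
`(d - 1)(d - 2)` is nonnegative, and at least `2` when `d ≥ 3`. A connected graph containing a
cycle has `m ≥ n`, and `m > n` already gives `M₁(G) ≥ 4n + 6`. When `m = n`, the graph is not a
cycle (a cycle has no cut vertex), so some vertex has degree `≥ 3` and `M₁(G) ≥ 4n + 2`.
Equality forces the degree sequence `(1, 3, 2, …, 2)`. Walking from the leaf without
backtracking until a vertex repeats traces a copy of some `C_{m,ℓ}` in `G`; it is an injective
homomorphism that preserves degrees, so by connectivity it is onto and `G ≅ C_{n,ℓ}`. The cut
vertices of `C_{n,ℓ}` are exactly the `ℓ` vertices of the pendant path other than the leaf, so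
`ℓ = k`.
-/

open Finset

namespace SimpleGraph

variable {V W : Type*} {G : SimpleGraph V} {H : SimpleGraph W}

theorem Reachable.mem_of_forall_adj {S : Set V} (hS : ∀ ⦃u w⦄, u ∈ S → G.Adj u w → w ∈ S)
    {u v : V} (huv : G.Reachable u v) (hu : u ∈ S) : v ∈ S := by
  rw [reachable_iff_reflTransGen] at huv
  induction huv with
  | refl => exact hu
  | tail _ hadj ih => exact hS ih hadj

theorem Iso.isCutVertex_iff (e : G ≃g H) (v : V) : IsCutVertex H (e v) ↔ IsCutVertex G v :=
  not_congr (e.induce (s := {u | u ≠ v}) (t := {w | w ≠ e v})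
    (e.toEquiv.bijOn fun u => by simp)).connected_iff.symm

theorem Iso.ncard_setOf_isCutVertex (e : G ≃g H) :
    {v | IsCutVertex G v}.ncard = {w | IsCutVertex H w}.ncard := by
  rw [← Nat.card_coe_set_eq, ← Nat.card_coe_set_eq]
  exact Nat.card_congr (e.toEquiv.subtypeEquiv fun v => (e.isCutVertex_iff v).symm)

theorem reachable_induce_of_Icc_subset {n : ℕ} {H : SimpleGraph (Fin n)} (hH : pathGraph n ≤ H)
    {S : Set (Fin n)} {x y : S} (hxy : (x : Fin n).val ≤ (y : Fin n).val)
    (hS : ∀ z : Fin n, (x : Fin n).val ≤ z → (z : ℕ) ≤ (y : Fin n).val → z ∈ S) :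
    (H.induce S).Reachable x y := by
  obtain ⟨⟨y, hyn⟩, hy⟩ := y
  induction y with
  | zero =>
    obtain rfl : x = ⟨⟨0, hyn⟩, hy⟩ := Subtype.ext (Fin.ext (by simp at hxy; omega))
    rfl
  | succ y ih =>
    by_cases hxy' : (x : Fin n).val = y + 1
    · obtain rfl : x = ⟨⟨y + 1, hyn⟩, hy⟩ := Subtype.ext (Fin.ext hxy')
      rfl
    have hz : (⟨y, by omega⟩ : Fin n) ∈ S := hS _ (by simp at hxy ⊢; omega) (by simp)
    refine (ih (by omega) hz (by simp at hxy ⊢; omega)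
      fun z h1 h2 => hS z h1 (by simp at h2 ⊢; omega)).trans (Adj.reachable ?_)
    simp only [comap_adj, Function.Embedding.subtype_apply]
    exact hH (by simp [pathGraph_adj])

variable [Fintype V] [Fintype W]

theorem Iso.zagrebM1_eq (e : G ≃g H) : zagrebM1 G = zagrebM1 H :=
  Fintype.sum_equiv e.toEquiv _ _ fun v => by rw [← e.degree_eq v]; rfl

theorem two_le_degree_of_adj {v a b : V} (hab : a ≠ b) (ha : G.Adj v a) (hb : G.Adj v b) :
    2 ≤ G.degree v := by
  rw [← card_neighborFinset_eq_degree, ← card_pair hab]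
  exact card_le_card fun x hx => by
    simp only [mem_insert, mem_singleton] at hx
    rcases hx with rfl | rfl <;> simpa

theorem three_le_degree_of_adj {v a b c : V} (hab : a ≠ b) (hac : a ≠ c) (hbc : b ≠ c)
    (ha : G.Adj v a) (hb : G.Adj v b) (hc : G.Adj v c) : 3 ≤ G.degree v := by
  rw [← card_neighborFinset_eq_degree, ← card_eq_three.2 ⟨a, b, c, hab, hac, hbc, rfl⟩]
  exact card_le_card fun x hx => by
    simp only [mem_insert, mem_singleton] at hx
    rcases hx with rfl | rfl | rfl <;> simpa

theorem exists_adj_ne_of_two_le_degree {b : V} (h : 2 ≤ G.degree b) (a : V) :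
    ∃ w, G.Adj b w ∧ w ≠ a := by
  obtain ⟨w, hw, hwa⟩ := exists_mem_ne (s := G.neighborFinset b)
    (by rwa [card_neighborFinset_eq_degree]) a
  exact ⟨w, (G.mem_neighborFinset b w).1 hw, hwa⟩

theorem Hom.adj_iff_of_degree_le (f : G →g H) (hf : Function.Injective f)
    (hdeg : ∀ v, H.degree (f v) ≤ G.degree v) (a : V) (w : W) :
    H.Adj (f a) w ↔ ∃ b, G.Adj a b ∧ f b = w := by
  have himage : (G.neighborFinset a).map ⟨f, hf⟩ = H.neighborFinset (f a) :=
    eq_of_subset_of_card_le (fun x hx => by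
      obtain ⟨b, hb, rfl⟩ := mem_map.1 hx
      simpa using f.map_adj (by simpa using hb))
      (by simpa only [card_map, card_neighborFinset_eq_degree] using hdeg a)
  rw [← mem_neighborFinset, ← himage]
  simp

theorem Hom.surjective_of_degree_le (f : G →g H) (hf : Function.Injective f)
    (hdeg : ∀ v, H.degree (f v) ≤ G.degree v) (hH : H.Connected) [Nonempty V] :
    Function.Surjective f := by
  obtain ⟨v⟩ := ‹Nonempty V›
  intro w
  refine (hH.preconnected (f v) w).mem_of_forall_adj (S := Set.range f) ?_ ⟨v, rfl⟩
  rintro _ w ⟨a, rfl⟩ hadj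
  obtain ⟨b, -, rfl⟩ := (f.adj_iff_of_degree_le hf hdeg a w).1 hadj
  exact ⟨b, rfl⟩

theorem Hom.nonempty_iso_of_degree_le (f : G →g H) (hf : Function.Injective f)
    (hdeg : ∀ v, H.degree (f v) ≤ G.degree v) (hH : H.Connected) [Nonempty V] :
    Nonempty (G ≃g H) :=
  ⟨{ toEquiv := .ofBijective f (show Function.Bijective f from
       ⟨hf, f.surjective_of_degree_le hf hdeg hH⟩)
     map_rel_iff' := fun {a b} => by
       simp only [Equiv.ofBijective_apply, f.adj_iff_of_degree_le hf hdeg, hf.eq_iff]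
       exact ⟨fun ⟨c, hac, hcb⟩ => hcb ▸ hac, fun h => ⟨b, h, rfl⟩⟩ }⟩

end SimpleGraph

namespace SimpleGraph

variable {V : Type*} (G : SimpleGraph V)

noncomputable def nextAvoiding (a b : V) : V :=
  if h : ∃ w, G.Adj b w ∧ w ≠ a then h.choose else b

/-- Step `1` is taken from `p` avoiding `p` itself, i.e. to an arbitrary neighbour of `p`. -/
noncomputable def nonBacktrackingSeq (p : V) : ℕ → V
  | 0 => p
  | 1 => G.nextAvoiding p p
  | i + 2 => G.nextAvoiding (nonBacktrackingSeq p i) (nonBacktrackingSeq p (i + 1))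

variable {G}

theorem adj_nextAvoiding {a b : V} (h : ∃ w, G.Adj b w ∧ w ≠ a) :
    G.Adj b (G.nextAvoiding a b) ∧ G.nextAvoiding a b ≠ a := by
  rw [nextAvoiding, dif_pos h]
  exact h.choose_spec

variable [Fintype V] {p : V}

theorem nonBacktrackingSeq_adj_succ (hp : 1 ≤ G.degree p) (h2 : ∀ u ≠ p, 2 ≤ G.degree u)
    {j : ℕ} (hj : j = 0 ∨ G.nonBacktrackingSeq p j ≠ p) :
    G.Adj (G.nonBacktrackingSeq p j) (G.nonBacktrackingSeq p (j + 1)) := by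
  rcases j with _ | j
  · obtain ⟨w, hw⟩ := G.degree_pos_iff_exists_adj p |>.1 hp
    exact (adj_nextAvoiding ⟨w, hw, hw.ne'⟩).1
  · exact (adj_nextAvoiding
      (exists_adj_ne_of_two_le_degree (h2 _ (hj.resolve_left j.succ_ne_zero)) _)).1

theorem nonBacktrackingSeq_add_two_ne (h2 : ∀ u ≠ p, 2 ≤ G.degree u) {j : ℕ}
    (hj : G.nonBacktrackingSeq p (j + 1) ≠ p) :
    G.nonBacktrackingSeq p (j + 2) ≠ G.nonBacktrackingSeq p j :=
  (adj_nextAvoiding (exists_adj_ne_of_two_le_degree (h2 _ hj) _)).2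

/-- `m` is the first time the sequence revisits a vertex, and `r` the earlier visit. -/
theorem exists_nonBacktrackingSeq_closes (hp : 1 ≤ G.degree p) (h2 : ∀ u ≠ p, 2 ≤ G.degree u) :
    ∃ m r, r + 3 ≤ m ∧ Set.InjOn (G.nonBacktrackingSeq p) (Set.Iio m) ∧
      (∀ j, j + 1 < m → G.Adj (G.nonBacktrackingSeq p j) (G.nonBacktrackingSeq p (j + 1))) ∧
      G.Adj (G.nonBacktrackingSeq p (m - 1)) (G.nonBacktrackingSeq p r) := by
  set s := G.nonBacktrackingSeq p
  have hrep : ∃ i, ∃ r < i, s i = s r := by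
    obtain ⟨a, b, hab, hs⟩ :=
      Fintype.exists_ne_map_eq_of_card_lt (fun i : Fin (Fintype.card V + 1) => s i) (by simp)
    rcases lt_or_gt_of_ne (Fin.val_ne_of_ne hab) with h | h
    · exact ⟨b, a, h, hs.symm⟩
    · exact ⟨a, b, h, hs⟩
  classical
  obtain ⟨r, hrm, hsr⟩ := Nat.find_spec hrep
  set m := Nat.find hrep
  have hinj : Set.InjOn s (Set.Iio m) := by
    intro a ha b hb hab
    by_contra hne
    rcases lt_or_gt_of_ne hne with h | h
    · exact Nat.find_min hrep hb ⟨a, h, hab.symm⟩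
    · exact Nat.find_min hrep ha ⟨b, h, hab⟩
  have hne_p : ∀ j, 1 ≤ j → j < m → s j ≠ p := fun j h1 h2 hj =>
    absurd (hinj h2 (show 0 < m by omega) hj) (by omega)
  have hadj : ∀ j < m, G.Adj (s j) (s (j + 1)) := fun j hj =>
    nonBacktrackingSeq_adj_succ hp h2 (by
      rcases j with _ | j
      exacts [.inl rfl, .inr (hne_p _ (by omega) hj)])
  have hclose : G.Adj (s (m - 1)) (s r) := by
    simpa [Nat.sub_add_cancel (show 1 ≤ m by omega), hsr] using hadj (m - 1) (by omega)
  have hr1 : r ≠ m - 1 := fun h => hclose.ne (by rw [h])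
  have hr2 : m ≥ 2 → r ≠ m - 2 := fun hm h => by
    have := nonBacktrackingSeq_add_two_ne h2 (hne_p (m - 2 + 1) (by omega) (by omega))
    rw [show m - 2 + 2 = m by omega] at this
    exact this (h ▸ hsr)
  exact ⟨m, r, by omega, hinj, fun j hj => hadj j (by omega), hclose⟩

end SimpleGraph

theorem sub_one_mul_sub_two_nonneg (d : ℤ) : 0 ≤ (d - 1) * (d - 2) := by
  rcases le_or_gt d 1 with h | h <;> nlinarith

open SimpleGraph

section Cnk

variable {n k : ℕ}

theorem cnk_adj {a b : Fin n} :
    (cnk n k).Adj a b ↔ (a : ℕ) ≠ b ∧ ((b : ℕ) = a + 1 ∨ (a : ℕ) = b + 1 ∨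
      ((a : ℕ) = k ∧ (b : ℕ) = n - 1) ∨ ((b : ℕ) = k ∧ (a : ℕ) = n - 1)) := by
  simp only [cnk, fromEdgeSet_adj, Set.mem_union, Set.mem_ofPred_eq, Sym2.eq_iff, ne_eq,
    Fin.val_inj]
  constructor
  · rintro ⟨⟨i, j, h, ⟨rfl, rfl⟩ | ⟨rfl, rfl⟩⟩ | ⟨i, j, hi, hj, ⟨rfl, rfl⟩ | ⟨rfl, rfl⟩⟩, hne⟩ <;>
      simp_all
  · rintro ⟨hne, h | h | ⟨ha, hb⟩ | ⟨hb, ha⟩⟩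
    · exact ⟨.inl ⟨a, b, h, .inl ⟨rfl, rfl⟩⟩, hne⟩
    · exact ⟨.inl ⟨b, a, h, .inr ⟨rfl, rfl⟩⟩, hne⟩
    · exact ⟨.inr ⟨a, b, ha, hb, .inl ⟨rfl, rfl⟩⟩, hne⟩
    · exact ⟨.inr ⟨b, a, hb, ha, .inr ⟨rfl, rfl⟩⟩, hne⟩

theorem pathGraph_le_cnk : pathGraph n ≤ cnk n k := fun a b h => by
  rw [pathGraph_adj] at h
  rw [cnk_adj]
  omega

theorem cnk_degree (hk : k + 3 ≤ n) (i : Fin n) :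
    (cnk n k).degree i = (if (i : ℕ) = 0 then 1 else 2) + (if (i : ℕ) = k then 1 else 0) := by
  have hi := i.isLt
  rw [← card_neighborFinset_eq_degree]
  have nbrs : ∀ s : Finset (Fin n), (∀ j : Fin n, j ∈ s ↔ (cnk n k).Adj i j) →
      (cnk n k).neighborFinset i = s := fun s hs => by ext j; simp [hs]
  by_cases h0 : (i : ℕ) = 0 <;> by_cases hik : (i : ℕ) = k
  · rw [if_pos h0, if_pos hik, nbrs {⟨1, by omega⟩, ⟨n - 1, by omega⟩}
      (fun j => by simp [cnk_adj, Fin.ext_iff]; omega),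
      card_pair (by simp only [Ne, Fin.ext_iff]; omega)]
  · rw [if_pos h0, if_neg hik, nbrs {⟨1, by omega⟩}
      (fun j => by simp [cnk_adj, Fin.ext_iff]; omega), card_singleton]
  · rw [if_neg h0, if_pos hik, nbrs {⟨i - 1, by omega⟩, ⟨i + 1, by omega⟩, ⟨n - 1, by omega⟩}
      (fun j => by simp [cnk_adj, Fin.ext_iff]; omega),
      card_insert_of_notMem (by simp only [mem_insert, mem_singleton, Fin.ext_iff]; omega),
      card_pair (by simp only [Ne, Fin.ext_iff]; omega)]
  rw [if_neg h0, if_neg hik]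
  by_cases hlast : (i : ℕ) = n - 1
  · rw [nbrs {⟨n - 2, by omega⟩, ⟨k, by omega⟩} (fun j => by simp [cnk_adj, Fin.ext_iff]; omega),
      card_pair (by simp only [Ne, Fin.ext_iff]; omega)]
  · rw [nbrs {⟨i - 1, by omega⟩, ⟨i + 1, by omega⟩}
      (fun j => by simp [cnk_adj, Fin.ext_iff]; omega),
      card_pair (by simp only [Ne, Fin.ext_iff]; omega)]

theorem zagrebM1_cnk (hk : 1 ≤ k) (hkn : k + 3 ≤ n) : zagrebM1 (cnk n k) = 4 * n + 2 := by
  have pointwise : ∀ i : Fin n, (cnk n k).degree i ^ 2 + (if i = ⟨0, by omega⟩ then 3 else 0) =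
      4 + (if i = ⟨k, by omega⟩ then 5 else 0) := fun i => by
    rw [cnk_degree hkn]
    simp only [Fin.ext_iff]
    split_ifs <;> omega
  have hsum := sum_congr rfl fun i (_ : i ∈ univ) => pointwise i
  simp only [sum_add_distrib, sum_const, card_univ, Fintype.card_fin, smul_eq_mul, sum_ite_eq',
    mem_univ, if_true] at hsum
  rw [zagrebM1]
  omega

theorem isCutVertex_cnk_iff (hk : k + 3 ≤ n) (i : Fin n) :
    IsCutVertex (cnk n k) i ↔ 1 ≤ (i : ℕ) ∧ (i : ℕ) ≤ k := by
  have hi := i.isLt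
  constructor
  · intro hcut
    by_contra hend
    apply hcut
    rw [connected_iff_exists_forall_reachable]
    have chain (x y : {u : Fin n | u ≠ i}) :=
      reachable_induce_of_Icc_subset (x := x) (y := y) (pathGraph_le_cnk (k := k))
    by_cases hi0 : (i : ℕ) = 0
    · refine ⟨⟨⟨1, by omega⟩, by simp [Fin.ext_iff]; omega⟩, fun y => chain _ _ ?_ ?_⟩
      · have := y.2
        simp [Fin.ext_iff] at this
        simp
        omega
      · intro z h1 h2
        simp [Fin.ext_iff] at h1 ⊢
        omega
    -- for `i > k` every vertex reaches `k`, those beyond `i` through the edge `(n - 1)k`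
    refine ⟨⟨⟨k, by omega⟩, by simp [Fin.ext_iff]; omega⟩, fun y => ?_⟩
    have hy := y.2
    simp only [Set.mem_ofPred_eq, ne_eq, Fin.ext_iff] at hy
    rcases lt_or_ge (y : Fin n).val k with hyk | hky
    · exact (chain _ _ (by simp; omega)
        fun z h1 h2 => by simp [Fin.ext_iff] at h1 h2 ⊢; omega).symm
    rcases lt_or_gt_of_ne hy with hyi | hyi
    · exact chain _ _ (by simp; omega) fun z h1 h2 => by simp [Fin.ext_iff] at h1 h2 ⊢; omega
    have hlast : (⟨n - 1, by omega⟩ : Fin n) ∈ {u : Fin n | u ≠ i} := by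
      simp [Fin.ext_iff]; omega
    refine (Adj.reachable (v := ⟨_, hlast⟩) ?_).trans
      (chain _ _ (by simp; omega) fun z h1 h2 => by simp [Fin.ext_iff] at h1 h2 ⊢; omega).symm
    simp [cnk_adj]
    omega
  · rintro ⟨hi1, hik⟩ hconn
    have h0 : (⟨0, by omega⟩ : Fin n) ∈ {u : Fin n | u ≠ i} := by simp [Fin.ext_iff]; omega
    have hlast : (⟨n - 1, by omega⟩ : Fin n) ∈ {u : Fin n | u ≠ i} := by
      simp [Fin.ext_iff]; omega
    have hreach := hconn.preconnected ⟨_, h0⟩ ⟨_, hlast⟩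
    have hbelow := hreach.mem_of_forall_adj
      (S := {u : {u : Fin n | u ≠ i} | (u : Fin n).val < i}) (fun u w hu hadj => by
        have hw := w.2
        simp only [comap_adj, Function.Embedding.subtype_apply, cnk_adj] at hadj
        simp only [Set.mem_ofPred_eq, ne_eq, Fin.ext_iff] at hu hw ⊢
        omega) (show 0 < (i : ℕ) by omega)
    simp only [Set.mem_ofPred_eq] at hbelow
    omega

theorem ncard_setOf_isCutVertex_cnk (hk : k + 3 ≤ n) :
    {v | IsCutVertex (cnk n k) v}.ncard = k := by
  have hset : {v | IsCutVertex (cnk n k) v} = ↑(Icc (⟨1, by omega⟩ : Fin n) ⟨k, by omega⟩) := by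
    ext v
    simp [isCutVertex_cnk_iff hk, Fin.le_def]
  rw [hset, Set.ncard_coe_finset, Fin.card_Icc]
  simp

end Cnk

namespace SimpleGraph

variable {V : Type*} [Fintype V] {G : SimpleGraph V}

/-- This is the degree pattern of `cnk n ℓ`, with `p` the leaf `0` and `q` the vertex `ℓ` of
degree three; `p = q` describes the cycle `cnk n 0`. -/
theorem exists_iso_cnk (hconn : G.Connected) {p q : V}
    (hdeg : ∀ u, G.degree u = (if u = p then 1 else 2) + (if u = q then 1 else 0)) :
    ∃ ℓ, ℓ + 3 ≤ Fintype.card V ∧ Nonempty (G ≃g cnk (Fintype.card V) ℓ) := by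
  have hp : 1 ≤ G.degree p := by rw [hdeg, if_pos rfl]; omega
  have h2 : ∀ u ≠ p, 2 ≤ G.degree u := fun u hu => by rw [hdeg, if_neg hu]; omega
  obtain ⟨m, r, hrm, hinj, hadj, hclose⟩ := exists_nonBacktrackingSeq_closes hp h2
  set s := G.nonBacktrackingSeq p
  have hs0 : s 0 = p := rfl
  have hmem : ∀ j, j < m → j ∈ Set.Iio m := fun j hj => hj
  have hsr : s r = q := by
    rcases r with _ | r
    · have h := two_le_degree_of_adj (hinj.ne (hmem 1 (by omega)) (hmem (m - 1) (by omega))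
        (by omega)) (hadj 0 (by omega)) hclose.symm
      rw [hdeg, hs0, if_pos rfl] at h
      split_ifs at h with hpq
      exacts [hpq, by omega]
    · have h := three_le_degree_of_adj (v := s (r + 1))
        (hinj.ne (hmem r (by omega)) (hmem (r + 2) (by omega)) (by omega))
        (hinj.ne (hmem r (by omega)) (hmem (m - 1) (by omega)) (by omega))
        (hinj.ne (hmem (r + 2) (by omega)) (hmem (m - 1) (by omega)) (by omega))
        (hadj r (by omega)).symm (hadj (r + 1) (by omega)) hclose.symm
      rw [hdeg] at h
      by_contra hq
      rw [if_neg hq] at h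
      split_ifs at h <;> omega
  let f : cnk m r →g G := ⟨fun j => s j, fun {a b} h => by
    rw [cnk_adj] at h
    rcases h with ⟨-, h | h | ⟨ha, hb⟩ | ⟨hb, ha⟩⟩
    · simpa [h] using hadj a (by omega)
    · simpa [h] using (hadj b (by omega)).symm
    · simpa [ha, hb] using hclose.symm
    · simpa [ha, hb] using hclose⟩
  have hf : Function.Injective f := fun a b h => Fin.ext (hinj a.isLt b.isLt h)
  have hfdeg : ∀ j, G.degree (f j) ≤ (cnk m r).degree j := fun j => by
    rw [hdeg, cnk_degree hrm, ← hs0, ← hsr]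
    simp only [f, RelHom.coeFn_mk, hinj.eq_iff j.isLt (hmem 0 (by omega)),
      hinj.eq_iff j.isLt (hmem r (by omega)), le_refl]
  have : Nonempty (Fin m) := ⟨⟨0, by omega⟩⟩
  obtain ⟨e⟩ := f.nonempty_iso_of_degree_le hf hfdeg hconn
  obtain rfl : Fintype.card V = m := by simpa using (Fintype.card_congr e.toEquiv).symm
  exact ⟨r, hrm, ⟨e.symm⟩⟩

theorem exists_degree_ne_two_of_isCutVertex (hconn : G.Connected) {c : V}
    (hc : IsCutVertex G c) : ∃ v, G.degree v ≠ 2 := by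
  by_contra! h2
  -- a 2-regular `G` is some `cnk n ℓ`; its cut vertex forces `ℓ ≥ 1`, hence a vertex of degree 3
  obtain ⟨ℓ, hℓ, ⟨e⟩⟩ := exists_iso_cnk hconn (p := c) (q := c) fun u => by
    rw [h2 u]; split_ifs <;> rfl
  have hcℓ := (isCutVertex_cnk_iff hℓ (e c)).1 ((e.isCutVertex_iff c).2 hc)
  have := h2 (e.symm ⟨ℓ, by omega⟩)
  rw [e.symm.degree_eq, cnk_degree hℓ, if_neg (show ¬ ℓ = 0 by omega), if_pos rfl] at this
  omega

theorem card_le_card_edgeFinset_of_isCycle (hconn : G.Connected) {x : V} {c : G.Walk x x}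
    (hc : c.IsCycle) : Fintype.card V ≤ #G.edgeFinset := by
  have hnt : ¬ G.IsTree := fun ht => ht.isAcyclic c hc
  have hle := hconn.card_vert_le_card_edgeSet_add_one
  rw [isTree_iff_connected_and_card] at hnt
  simp only [Nat.card_eq_fintype_card, ← edgeFinset_card, hconn, true_and] at hle hnt
  omega

theorem cast_zagrebM1_eq (G : SimpleGraph V) :
    (zagrebM1 G : ℤ) = ∑ v, ((G.degree v : ℤ) - 1) * ((G.degree v : ℤ) - 2) +
      6 * #G.edgeFinset - 2 * Fintype.card V := by
  have hsum : ∑ v, (G.degree v : ℤ) = 2 * #G.edgeFinset := by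
    exact_mod_cast G.sum_degrees_eq_twice_card_edges
  have hexpand : ∀ v, ((G.degree v : ℤ) - 1) * ((G.degree v : ℤ) - 2) =
      (G.degree v : ℤ) ^ 2 - 3 * G.degree v + 2 := fun v => by ring
  simp only [zagrebM1, Nat.cast_sum, Nat.cast_pow, hexpand, sum_add_distrib, sum_sub_distrib,
    ← mul_sum, hsum, sum_const, card_univ, nsmul_eq_mul]
  ring

theorem exists_three_le_degree (hm : #G.edgeFinset = Fintype.card V)
    (hne : ∃ v, G.degree v ≠ 2) : ∃ w, 3 ≤ G.degree w := by
  by_contra! h3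
  obtain ⟨v, hv⟩ := hne
  have hlt : ∑ u, G.degree u < ∑ _u : V, 2 :=
    sum_lt_sum (fun u _ => by have := h3 u; omega) ⟨v, mem_univ v, by have := h3 v; omega⟩
  simp only [sum_degrees_eq_twice_card_edges, hm, sum_const, card_univ, smul_eq_mul] at hlt
  omega

theorem exists_degree_eq_ite {w : V} (hw : 3 ≤ G.degree w)
    (hsum : ∑ v, G.degree v = 2 * Fintype.card V)
    (hexcess : ∑ v, ((G.degree v : ℤ) - 1) * ((G.degree v : ℤ) - 2) = 2) :
    ∃ p, ∀ u, G.degree u = (if u = p then 1 else 2) + (if u = w then 1 else 0) := by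
  have hsplit := add_sum_erase univ (fun v => ((G.degree v : ℤ) - 1) * ((G.degree v : ℤ) - 2))
    (mem_univ w)
  have hrest_nonneg := sum_nonneg fun v (_ : v ∈ univ.erase w) =>
    sub_one_mul_sub_two_nonneg (G.degree v)
  have hw' : (3 : ℤ) ≤ G.degree w := by exact_mod_cast hw
  have hw3 : G.degree w = 3 := by
    have : ((G.degree w : ℤ) - 1) * ((G.degree w : ℤ) - 2) ≤ 2 := by linarith
    have : (G.degree w : ℤ) ≤ 3 := by nlinarith
    omega
  have hfw : ((G.degree w : ℤ) - 1) * ((G.degree w : ℤ) - 2) = 2 := by rw [hw3]; norm_num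
  have h12 : ∀ u ≠ w, G.degree u = 1 ∨ G.degree u = 2 := fun u hu => by
    have hzero := (sum_eq_zero_iff_of_nonneg fun v _ =>
      sub_one_mul_sub_two_nonneg (G.degree v)).1 (by linarith) u (mem_erase.2 ⟨hu, mem_univ u⟩)
    rcases mul_eq_zero.1 hzero with h | h <;> omega
  have hcount : ∑ v, (G.degree v + if G.degree v = 1 then 1 else 0) =
      ∑ v, (2 + if v = w then 1 else 0) := sum_congr rfl fun v _ => by
    by_cases hv : v = w
    · subst hv; simp [hw3]
    · rcases h12 v hv with h | h <;> simp [h, hv]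
  simp only [sum_add_distrib, sum_ite_eq', mem_univ, if_true] at hcount
  simp only [hsum, sum_boole, Nat.cast_id, sum_const, card_univ, smul_eq_mul] at hcount
  obtain ⟨p, hp⟩ := card_eq_one.1 (show #(univ.filter fun v => G.degree v = 1) = 1 by omega)
  have hp1 : ∀ u, G.degree u = 1 ↔ u = p := fun u => by
    simpa using congrArg (u ∈ ·) hp
  refine ⟨p, fun u => ?_⟩
  by_cases huw : u = w
  · subst huw
    have : u ≠ p := fun h => by have := (hp1 u).2 h; omega
    simp [hw3, this]
  · rcases h12 u huw with h | h
    · obtain rfl := (hp1 u).1 h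
      simp [h, huw]
    · simp [h, huw, show u ≠ p from fun hup => by have := (hp1 u).2 hup; omega]

theorem four_mul_card_add_two_le_zagrebM1 (hconn : G.Connected) {x : V} {c : G.Walk x x}
    (hc : c.IsCycle) (hne : ∃ v, G.degree v ≠ 2) : 4 * Fintype.card V + 2 ≤ zagrebM1 G := by
  have hid := cast_zagrebM1_eq G
  have hexcess := sum_nonneg fun v (_ : v ∈ univ) =>
    sub_one_mul_sub_two_nonneg (G.degree v)
  rcases (card_le_card_edgeFinset_of_isCycle hconn hc).lt_or_eq with hlt | hm
  · omega
  obtain ⟨w, hw⟩ := exists_three_le_degree hm.symm hne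
  have hw' : (3 : ℤ) ≤ G.degree w := by exact_mod_cast hw
  have hle := single_le_sum (fun v (_ : v ∈ univ) => sub_one_mul_sub_two_nonneg (G.degree v))
    (mem_univ w)
  have : (2 : ℤ) ≤ ((G.degree w : ℤ) - 1) * ((G.degree w : ℤ) - 2) := by nlinarith
  omega

theorem exists_degree_eq_ite_of_zagrebM1_eq (hconn : G.Connected) {x : V} {c : G.Walk x x}
    (hc : c.IsCycle) (hne : ∃ v, G.degree v ≠ 2) (heq : zagrebM1 G = 4 * Fintype.card V + 2) :
    ∃ p q, ∀ u, G.degree u = (if u = p then 1 else 2) + (if u = q then 1 else 0) := by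
  have hid := cast_zagrebM1_eq G
  have hexcess := sum_nonneg fun v (_ : v ∈ univ) =>
    sub_one_mul_sub_two_nonneg (G.degree v)
  have hm : #G.edgeFinset = Fintype.card V := by
    have := card_le_card_edgeFinset_of_isCycle hconn hc
    omega
  obtain ⟨w, hw⟩ := exists_three_le_degree hm hne
  obtain ⟨p, hp⟩ := exists_degree_eq_ite hw (by rw [sum_degrees_eq_twice_card_edges, hm])
    (by omega)
  exact ⟨p, w, hp⟩

end SimpleGraph

/-- For `k ≥ 1`, `n - k ≥ 3` and `G ∈ 𝕍_{n,k}`, the first Zagreb index satisfies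
`M₁(G) ≥ 4n + 2`, with equality if and only if `G ≅ C_{n,k}`. -/
theorem M1_lower_bound {V : Type*} [Fintype V] (n k : ℕ)
    (hk : 1 ≤ k) (hnk : 3 ≤ n - k) (hcard : Fintype.card V = n)
    (G : SimpleGraph V) (hG : MemVnk G k) :
    4 * n + 2 ≤ zagrebM1 G ∧
      (zagrebM1 G = 4 * n + 2 ↔ Nonempty (G ≃g cnk n k)) := by
  obtain ⟨hconn, hcut, x, c, hc⟩ := hG
  subst hcard
  obtain ⟨v, hv⟩ : {v | IsCutVertex G v}.Nonempty := Set.nonempty_of_ncard_ne_zero (by omega)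
  have hne := exists_degree_ne_two_of_isCutVertex hconn hv
  refine ⟨four_mul_card_add_two_le_zagrebM1 hconn hc hne, fun heq => ?_, fun ⟨e⟩ => ?_⟩
  · obtain ⟨p, q, hdeg⟩ := exists_degree_eq_ite_of_zagrebM1_eq hconn hc hne heq
    obtain ⟨ℓ, hℓ, ⟨e⟩⟩ := exists_iso_cnk hconn hdeg
    obtain rfl : ℓ = k := by
      rw [← hcut, e.ncard_setOf_isCutVertex, ncard_setOf_isCutVertex_cnk hℓ]
    exact ⟨e⟩
  · rw [e.zagrebM1_eq, zagrebM1_cnk hk (by omega)]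
end
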